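/- arXiv:1308.4995 — 7 statements merged into one kernel-verified Lean document; each statement's English description precedes it below -/
import Mathlib

section
/- Let E be a complex Banach space and let 𝒳 be a linear subspace of B(E) such that the closure of the unit ball of 𝒳 in the weak operator topology contains a nonzero compact operator. Then 𝒳 is localizing. -/
open Filter Topology

/-- A linear subspace `𝒳 ⊆ B(E)` is *localizing* if there exists a closed ball `B ⊆ E`
with `0 ∉ B` such that for every sequence in `B` there are a subsequence and operators
`X_j ∈ 𝒳` with `‖X_j‖ ≤ 1` such that `X_j x_{n_j}` converges in norm to a nonzero vector. -/
def IsLocalizing {E : Type*} [NormedAddCommGroup E] [NormedSpace ℂ E]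
    (𝒳 : Set (E →L[ℂ] E)) : Prop :=
  ∃ (c : E) (r : ℝ), 0 < r ∧ (0 : E) ∉ Metric.closedBall c r ∧
    ∀ x : ℕ → E, (∀ n, x n ∈ Metric.closedBall c r) →
      ∃ (n : ℕ → ℕ) (X : ℕ → E →L[ℂ] E) (y : E), StrictMono n ∧
        (∀ j, X j ∈ 𝒳) ∧ (∀ j, ‖X j‖ ≤ 1) ∧ y ≠ 0 ∧
        Tendsto (fun j => X j (x (n j))) atTop (𝓝 y)

/-- The closure of a set of operators in the weak operator topology. -/
def wotClosure (E : Type*) [NormedAddCommGroup E] [NormedSpace ℂ E]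
    (S : Set (E →L[ℂ] E)) : Set (E →L[ℂ] E) :=
  {T | (ContinuousLinearMapWOT.ofCLM T : E →WOT[ℂ] E) ∈
    closure ((ContinuousLinearMapWOT.ofCLM : (E →L[ℂ] E) → E →WOT[ℂ] E) '' S)}

/-!
A nonzero compact operator `T` is bounded below, say by `δ > 0`, on a small closed ball `B`
around a point `x₀` with `T x₀ ≠ 0`; in particular `0 ∉ B`. Given a sequence in `B`,
compactness of `T` gives a subsequence along which `T x_{n_j} → y`, and `‖y‖ ≥ δ`.
Since `T` is a WOT-limit of the convex set `S` of operators in the unit ball of `𝒳`, each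
`T v` is a weak limit of the convex set `{X v | X ∈ S}`, hence (Mazur) a norm limit of it.
Choosing `X_j ∈ S` with `‖X_j x_{n_j} - T x_{n_j}‖ < 1/(j+1)` gives `X_j x_{n_j} → y`.
-/

lemma apply_mem_closure_of_mem_wotClosure {E : Type*} [NormedAddCommGroup E]
    [NormedSpace ℂ E] {S : Set (E →L[ℂ] E)} (hS : Convex ℝ S)
    {T : E →L[ℂ] E} (hT : T ∈ wotClosure E S) (v : E) :
    T v ∈ closure ((fun X : E →L[ℂ] E => X v) '' S) := by
  have hcont : Continuous fun A : E →WOT[ℂ] E => toWeakSpace ℂ E (A v) :=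
    WeakBilin.continuous_of_continuous_eval _ fun φ =>
      ContinuousLinearMapWOT.continuous_dual_apply v φ
  have hweak : toWeakSpace ℂ E (T v) ∈ closure (toWeakSpace ℂ E '' ((fun X => X v) '' S)) := by
    have := image_closure_subset_closure_image hcont ⟨_, hT, rfl⟩
    rw [Set.image_image] at this ⊢
    exact this
  have hconv : Convex ℝ ((fun X : E →L[ℂ] E => X v) '' S) :=
    hS.is_linear_image ⟨fun _ _ => rfl, fun _ _ => rfl⟩
  rw [← hconv.toWeakSpace_closure ℂ] at hweak
  obtain ⟨w, hw, hwv⟩ := hweak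
  rwa [(toWeakSpace ℂ E).injective hwv] at hw

lemma Submodule.convex_inter_closedBall {𝕜 F : Type*} [NormedField 𝕜]
    [SeminormedAddCommGroup F] [NormedSpace ℝ F] [Module 𝕜 F] [SMul ℝ 𝕜]
    [IsScalarTower ℝ 𝕜 F] (p : Submodule 𝕜 F) (r : ℝ) :
    Convex ℝ {x | x ∈ p ∧ ‖x‖ ≤ r} := by
  convert (p.restrictScalars ℝ).convex.inter (convex_closedBall 0 r) using 1
  ext
  simp

lemma ContinuousLinearMap.exists_closedBall_le_norm_apply {𝕜 E F : Type*}
    [NontriviallyNormedField 𝕜] [SeminormedAddCommGroup E] [NormedSpace 𝕜 E]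
    [NormedAddCommGroup F] [NormedSpace 𝕜 F] {T : E →L[𝕜] F} (hT : T ≠ 0) :
    ∃ (c : E) (r δ : ℝ), 0 < r ∧ 0 < δ ∧ ∀ z ∈ Metric.closedBall c r, δ ≤ ‖T z‖ := by
  obtain ⟨c, hc⟩ : ∃ c, T c ≠ 0 := by
    by_contra! h
    exact hT (ContinuousLinearMap.ext h)
  have hδ : 0 < ‖T c‖ / 2 := by positivity
  have hnhds : {z | ‖T c‖ / 2 < ‖T z‖} ∈ 𝓝 c :=
    (isOpen_lt continuous_const (by fun_prop)).mem_nhds (by simp [hc])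
  obtain ⟨r, hr, hball⟩ := Metric.nhds_basis_closedBall.mem_iff.mp hnhds
  exact ⟨c, r, _, hr, hδ, fun z hz => (hball hz).le⟩

lemma IsCompactOperator.exists_subseq_tendsto {𝕜 E F : Type*} [NontriviallyNormedField 𝕜]
    [SeminormedAddCommGroup E] [NormedSpace 𝕜 E] [NormedAddCommGroup F] [NormedSpace 𝕜 F]
    {T : E →L[𝕜] F} (hT : IsCompactOperator T) {s : Set E} (hs : Bornology.IsBounded s)
    {x : ℕ → E} (hx : ∀ n, x n ∈ s) :
    ∃ (n : ℕ → ℕ) (y : F), StrictMono n ∧ Tendsto (fun j => T (x (n j))) atTop (𝓝 y) := by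
  have hcpt : IsCompact (closure (T '' s)) :=
    hT.isCompact_closure_image_of_bounded (f := (T : E →ₗ[𝕜] F)) hs
  obtain ⟨y, -, n, hn, hy⟩ := hcpt.tendsto_subseq fun k => subset_closure ⟨x k, hx k, rfl⟩
  exact ⟨n, y, hn, hy⟩

lemma exists_tendsto_of_tendsto_of_mem_closure_image {α β : Type*} [PseudoMetricSpace α]
    {f : ℕ → β → α} {S : Set β} {u : ℕ → α} {y : α} (hu : Tendsto u atTop (𝓝 y))
    (hmem : ∀ j, u j ∈ closure (f j '' S)) :
    ∃ X : ℕ → β, (∀ j, X j ∈ S) ∧ Tendsto (fun j => f j (X j)) atTop (𝓝 y) := by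
  have happrox : ∀ j : ℕ, ∃ X ∈ S, dist (u j) (f j X) < 1 / (j + 1) := fun j => by
    obtain ⟨-, ⟨X, hX, rfl⟩, hdist⟩ := Metric.mem_closure_iff.mp (hmem j) _ Nat.one_div_pos_of_nat
    exact ⟨X, hX, hdist⟩
  choose X hXS hXdist using happrox
  exact ⟨X, hXS, hu.congr_dist <| squeeze_zero (fun _ => dist_nonneg) (fun j => (hXdist j).le)
    tendsto_one_div_add_atTop_nhds_zero_nat⟩

theorem localizing_of_compact_in_wotClosure_ball_general
    {E : Type*} [NormedAddCommGroup E] [NormedSpace ℂ E]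
    (𝒳 : Submodule ℂ (E →L[ℂ] E))
    (T : E →L[ℂ] E) (hT : T ∈ wotClosure E {X | X ∈ 𝒳 ∧ ‖X‖ ≤ 1})
    (hTc : IsCompactOperator T) (hT0 : T ≠ 0) :
    IsLocalizing (𝒳 : Set (E →L[ℂ] E)) := by
  obtain ⟨c, r, δ, hr, hδ, hbelow⟩ := T.exists_closedBall_le_norm_apply hT0
  refine ⟨c, r, hr, fun h0 => by simpa [hδ.not_ge] using hbelow 0 h0, fun x hx => ?_⟩
  obtain ⟨n, y, hn, hTy⟩ := hTc.exists_subseq_tendsto Metric.isBounded_closedBall hx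
  have hy : y ≠ 0 := by
    rintro rfl
    simpa [hδ.not_ge] using ge_of_tendsto' hTy.norm fun j => hbelow _ (hx (n j))
  obtain ⟨X, hX, hXy⟩ := exists_tendsto_of_tendsto_of_mem_closure_image hTy fun j =>
    apply_mem_closure_of_mem_wotClosure (𝒳.convex_inter_closedBall 1) hT (x (n j))
  exact ⟨n, X, y, hn, fun j => (hX j).1, fun j => (hX j).2, hy, hXy⟩

/-- If the WOT-closure of the unit ball of a subspace `𝒳 ⊆ B(E)` contains a nonzero
compact operator, then `𝒳` is localizing. -/
theorem localizing_of_compact_in_wotClosure_ball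
    {E : Type*} [NormedAddCommGroup E] [NormedSpace ℂ E] [CompleteSpace E]
    (𝒳 : Submodule ℂ (E →L[ℂ] E))
    (T : E →L[ℂ] E) (hT : T ∈ wotClosure E {X | X ∈ 𝒳 ∧ ‖X‖ ≤ 1})
    (hTc : IsCompactOperator T) (hT0 : T ≠ 0) :
    IsLocalizing (𝒳 : Set (E →L[ℂ] E)) :=
  localizing_of_compact_in_wotClosure_ball_general 𝒳 T hT hTc hT0
end

section
/- Let (Ω, Σ, μ) be a finite measure space with no atoms. Then the algebra {M_φ : φ ∈ L∞(μ)} of all multiplication operators by bounded measurable functions, acting on the Hilbert space L²(μ), is not localizing. -/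
/-!
Suppose the multiplication algebra were localizing, with ball `closedBall c r`. Because `μ` has
no atoms it takes every intermediate value on subsets (Sierpiński), and splitting every set in
the fixed proportion `q` over and over yields sets `A i` of small measure `q μ(Ω)` that are
pairwise independent: `μ (A i ∩ A j) = q² μ(Ω)`. Cutting `A i` out of `c` keeps
`x i = 1_{(A i)ᶜ} c` in the ball, and every multiplication operator maps `x i` to a function
vanishing on `A i`, so a limit `y` of `X j (x (n j))` has `‖1_{A (n j)} y‖ → 0`. On the other
hand the centred indicators `1_{A i} - q` are orthogonal with equal norms, so by Bessel's
inequality `μ (A i ∩ E) → q μ E` for every `E`; choosing `E` on which `|y|` is bounded below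
keeps `‖1_{A i} y‖` away from `0` unless `y = 0`.
-/

open Filter Topology MeasureTheory Set
open scoped ENNReal InnerProductSpace

theorem tendsto_inner_of_pairwise_orthogonal {𝕜 E : Type*} [RCLike 𝕜] [NormedAddCommGroup E]
    [InnerProductSpace 𝕜 E] {f : ℕ → E} {a : ℝ} (horth : Pairwise fun i j => ⟪f i, f j⟫_𝕜 = 0)
    (hnorm : ∀ i, ‖f i‖ = a) (x : E) : Tendsto (fun i => ⟪f i, x⟫_𝕜) atTop (𝓝 0) := by
  rcases (hnorm 0 ▸ norm_nonneg _ : 0 ≤ a).eq_or_lt with rfl | ha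
  · simp [norm_eq_zero.1 (hnorm _)]
  set v : ℕ → E := fun i => ((a : 𝕜)⁻¹) • f i
  have hv : Orthonormal 𝕜 v := by
    refine ⟨fun i => ?_, fun i j hij => ?_⟩
    · simp [v, norm_smul, hnorm, ha.ne', abs_of_pos ha]
    · simp [v, inner_smul_left, inner_smul_right, horth hij]
  have hv0 : Tendsto (fun i => ⟪v i, x⟫_𝕜) atTop (𝓝 0) := by
    have hsq := (hv.inner_products_summable (x := x)).tendsto_atTop_zero
    rw [tendsto_zero_iff_norm_tendsto_zero]
    simpa [Function.comp_def, Real.sqrt_sq (norm_nonneg _)] using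
      (Real.continuous_sqrt.tendsto 0).comp hsq
  have hfv : ∀ i, f i = (a : 𝕜) • v i := fun i => by
    simp [v, smul_smul, mul_inv_cancel₀ ((RCLike.ofReal_ne_zero (K := 𝕜)).2 ha.ne')]
  simpa [hfv, inner_smul_left] using hv0.const_mul ((a : 𝕜))

namespace MeasureTheory

/-- When `p` takes the fraction `q` of every set, the sets `splitSeq p n univ` are pairwise
independent events of measure `q * μ univ`. -/
def splitSeq {Ω : Type*} (p : Set Ω → Set Ω) : ℕ → Set Ω → Set Ω
  | 0, S => p S
  | n + 1, S => splitSeq p n (p S) ∪ splitSeq p n (S \ p S)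

theorem splitSeq_subset {Ω : Type*} {p : Set Ω → Set Ω} (hp : ∀ S, p S ⊆ S) :
    ∀ n S, splitSeq p n S ⊆ S
  | 0, S => hp S
  | n + 1, S => union_subset ((splitSeq_subset hp n _).trans (hp S))
      ((splitSeq_subset hp n _).trans sdiff_subset)

variable {Ω : Type*} [MeasurableSpace Ω] {μ : Measure Ω}

theorem exists_half_maximal_extension {S C : Set Ω} {s : ℝ≥0∞}
    (hs : s ≠ ∞) (hCS : C ⊆ S) (hC : MeasurableSet C) (hCs : μ C ≤ s) :
    ∃ C', C ⊆ C' ∧ C' ⊆ S ∧ MeasurableSet C' ∧ μ C' ≤ s ∧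
      ∀ D ⊆ S \ C, MeasurableSet D → μ C + μ D ≤ s → μ C + μ D / 2 ≤ μ C' := by
  set σ := ⨆ (D : Set Ω) (_ : D ⊆ S \ C ∧ MeasurableSet D ∧ μ C + μ D ≤ s), μ D
  have hle : ∀ D ⊆ S \ C, MeasurableSet D → μ C + μ D ≤ s → μ D ≤ σ := fun D h₁ h₂ h₃ =>
    le_iSup₂ (f := fun D (_ : D ⊆ S \ C ∧ MeasurableSet D ∧ μ C + μ D ≤ s) => μ D) D ⟨h₁, h₂, h₃⟩
  obtain ⟨B, ⟨hBS, hB, hBs⟩, hσB⟩ :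
      ∃ B, (B ⊆ S \ C ∧ MeasurableSet B ∧ μ C + μ B ≤ s) ∧ σ / 2 ≤ μ B := by
    rcases eq_or_ne σ 0 with hσ | hσ
    · exact ⟨∅, ⟨empty_subset _, .empty, by simpa using hCs⟩, by simp [hσ]⟩
    · have hσs : σ ≤ s := iSup₂_le fun D hD => le_add_self.trans hD.2.2
      have := ENNReal.half_lt_self hσ (ne_top_of_le_ne_top hs hσs)
      simp only [σ, lt_iSup_iff, exists_prop] at this
      obtain ⟨B, hB, hlt⟩ := this
      exact ⟨B, hB, hlt.le⟩
  have hμ : μ (C ∪ B) = μ C + μ B :=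
    measure_union (disjoint_sdiff_right.mono_right hBS) hB
  refine ⟨C ∪ B, subset_union_left, union_subset hCS (hBS.trans sdiff_subset), hC.union hB,
    hμ ▸ hBs, fun D h₁ h₂ h₃ => ?_⟩
  rw [hμ]
  gcongr
  exact le_trans (by gcongr; exact hle D h₁ h₂ h₃) hσB

theorem exists_greedy_chain {S : Set Ω} {s : ℝ≥0∞} (hs : s ≠ ∞) :
    ∃ c : ℕ → Set Ω, Monotone c ∧ (∀ n, c n ⊆ S ∧ MeasurableSet (c n) ∧ μ (c n) ≤ s) ∧
      ∀ n, ∀ D ⊆ S \ c n, MeasurableSet D → μ (c n) + μ D ≤ s →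
        μ (c n) + μ D / 2 ≤ μ (c (n + 1)) := by
  choose! F hF using fun C (hC : C ⊆ S ∧ MeasurableSet C ∧ μ C ≤ s) =>
    exists_half_maximal_extension hs hC.1 hC.2.1 hC.2.2
  have hsucc : ∀ n, F^[n + 1] ∅ = F (F^[n] ∅) := fun n => Function.iterate_succ_apply' F n ∅
  have hgood : ∀ n, F^[n] ∅ ⊆ S ∧ MeasurableSet (F^[n] ∅) ∧ μ (F^[n] ∅) ≤ s := by
    intro n
    induction n with
    | zero => exact ⟨empty_subset _, .empty, by simp⟩
    | succ n ih =>
      rw [hsucc]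
      obtain ⟨-, hS, hm, hs, -⟩ := hF _ ih
      exact ⟨hS, hm, hs⟩
  refine ⟨fun n => F^[n] ∅, monotone_nat_of_le_succ fun n => ?_, hgood, fun n => ?_⟩
  · exact hsucc n ▸ (hF _ (hgood n)).1
  · simp only [hsucc]
    exact (hF _ (hgood n)).2.2.2.2

theorem measure_union_inter_union {T U U' V V' : Set Ω} (hU : U ⊆ T) (hU' : U' ⊆ T)
    (hV : V ⊆ Tᶜ) (hV' : V' ⊆ Tᶜ) (hVV' : MeasurableSet (V ∩ V')) :
    μ ((U ∪ V) ∩ (U' ∪ V')) = μ (U ∩ U') + μ (V ∩ V') := by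
  have hdecomp : (U ∪ V) ∩ (U' ∪ V') = (U ∩ U') ∪ (V ∩ V') := by
    ext ω
    have := @hU ω; have := @hU' ω; have := @hV ω; have := @hV' ω
    simp only [mem_union, mem_inter_iff, mem_compl_iff] at *
    tauto
  rw [hdecomp, measure_union _ hVV']
  exact disjoint_compl_right.mono (inter_subset_left.trans hU) (inter_subset_left.trans hV)

section splitSeq

variable {p : Set Ω → Set Ω}

theorem measurableSet_splitSeq (hp : ∀ S, MeasurableSet S → MeasurableSet (p S)) :
    ∀ n {S}, MeasurableSet S → MeasurableSet (splitSeq p n S)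
  | 0, S, hS => hp S hS
  | n + 1, S, hS => (measurableSet_splitSeq hp n (hp S hS)).union
      (measurableSet_splitSeq hp n (hS.diff (hp S hS)))

variable {q : ℝ≥0∞}

theorem measure_splitSeq (hp_sub : ∀ S, p S ⊆ S)
    (hp : ∀ S, MeasurableSet S → MeasurableSet (p S) ∧ μ (p S) = q * μ S) :
    ∀ n {S}, MeasurableSet S → μ (splitSeq p n S) = q * μ S
  | 0, S, hS => (hp S hS).2
  | n + 1, S, hS => by
    have hpS := (hp S hS).1
    have hdisj : Disjoint (splitSeq p n (p S)) (splitSeq p n (S \ p S)) :=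
      disjoint_sdiff_right.mono (splitSeq_subset hp_sub n _) (splitSeq_subset hp_sub n _)
    rw [splitSeq, measure_union hdisj
        (measurableSet_splitSeq (fun S hS => (hp S hS).1) n (hS.diff hpS)),
      measure_splitSeq hp_sub hp n hpS, measure_splitSeq hp_sub hp n (hS.diff hpS), ← mul_add]
    nth_rw 1 [← inter_eq_right.2 (hp_sub S)]
    rw [measure_inter_add_sdiff S hpS]

theorem measure_splitSeq_inter (hp_sub : ∀ S, p S ⊆ S)
    (hp : ∀ S, MeasurableSet S → MeasurableSet (p S) ∧ μ (p S) = q * μ S) :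
    ∀ {i j}, i ≠ j → ∀ {S}, MeasurableSet S →
      μ (splitSeq p i S ∩ splitSeq p j S) = q ^ 2 * μ S := by
  have hmeas := measurableSet_splitSeq fun S hS => (hp S hS).1
  have hsub : ∀ n S, splitSeq p n (S \ p S) ⊆ (p S)ᶜ := fun n S =>
    (splitSeq_subset hp_sub n _).trans fun _ h => h.2
  have hzero : ∀ j {S}, MeasurableSet S →
      μ (splitSeq p 0 S ∩ splitSeq p (j + 1) S) = q ^ 2 * μ S := by
    intro j S hS
    rw [splitSeq, splitSeq, inter_union_distrib_left,
      inter_eq_right.2 (splitSeq_subset hp_sub j _),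
      (disjoint_compl_right.mono_right (hsub j S)).inter_eq, union_empty,
      measure_splitSeq hp_sub hp j (hp S hS).1, (hp S hS).2, ← mul_assoc, sq]
  intro i
  induction i with
  | zero =>
    rintro (_ | j) hij S hS
    · exact absurd rfl hij
    · exact hzero j hS
  | succ i ih =>
    rintro (_ | j) hij S hS
    · rw [inter_comm]; exact hzero i hS
    have hpS := (hp S hS).1
    rw [splitSeq, splitSeq, measure_union_inter_union (splitSeq_subset hp_sub i _)
        (splitSeq_subset hp_sub j _) (hsub i S) (hsub j S)
        ((hmeas i (hS.diff hpS)).inter (hmeas j (hS.diff hpS))),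
      ih (by omega) hpS, ih (by omega) (hS.diff hpS), ← mul_add]
    nth_rw 1 [← inter_eq_right.2 (hp_sub S)]
    rw [measure_inter_add_sdiff S hpS]

end splitSeq

theorem tendsto_measureReal_inter_of_pairwise [IsFiniteMeasure μ] {A : ℕ → Set Ω}
    (hA : ∀ i, MeasurableSet (A i)) {P : ℝ} (hAi : ∀ i, μ.real (A i) = P * μ.real univ)
    (hAij : Pairwise fun i j => μ.real (A i ∩ A j) = P ^ 2 * μ.real univ)
    {E : Set Ω} (hE : MeasurableSet E) :
    Tendsto (fun i => μ.real (A i ∩ E)) atTop (𝓝 (P * μ.real E)) := by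
  let ind : ∀ {s : Set Ω}, MeasurableSet s → Lp ℝ 2 μ := fun hs =>
    indicatorConstLp 2 hs (measure_ne_top μ _) 1
  have hinner : ∀ {s t : Set Ω} (hs : MeasurableSet s) (ht : MeasurableSet t),
      ⟪ind hs, ind ht⟫_ℝ = μ.real (s ∩ t) := fun hs ht =>
    L2.real_inner_indicatorConstLp_one_indicatorConstLp_one hs ht
  let f : ℕ → Lp ℝ 2 μ := fun i => ind (hA i) - P • ind .univ
  have hf : ∀ i j, ⟪f i, f j⟫_ℝ =
      μ.real (A i ∩ A j) - P * μ.real (A j) - P * μ.real (A i) + P ^ 2 * μ.real univ := by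
    intro i j
    simp only [f, inner_sub_left, inner_sub_right, real_inner_smul_left, real_inner_smul_right,
      hinner, inter_univ, univ_inter]
    ring
  have horth : Pairwise fun i j => ⟪f i, f j⟫_ℝ = 0 := fun i j hij => by
    simp only [hf, hAij hij, hAi]; ring
  have hnorm : ∀ i, ‖f i‖ = √(P * μ.real univ - P ^ 2 * μ.real univ) := fun i => by
    rw [norm_eq_sqrt_real_inner, hf, inter_self, hAi]; ring_nf
  have hfE : ∀ i, ⟪f i, ind hE⟫_ℝ = μ.real (A i ∩ E) - P * μ.real E := fun i => by
    simp only [f, inner_sub_left, real_inner_smul_left, hinner, univ_inter]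
  simpa only [hfE, tendsto_sub_nhds_zero_iff] using
    tendsto_inner_of_pairwise_orthogonal horth hnorm (ind hE)

theorem exists_measurableSet_measure_pos_le_norm {F : Type*} [NormedAddCommGroup F]
    {y : Ω → F} (hy : AEStronglyMeasurable y μ) (hy0 : ¬ y =ᵐ[μ] 0) :
    ∃ E t, MeasurableSet E ∧ 0 < μ E ∧ 0 < t ∧ ∀ᵐ ω ∂μ, ω ∈ E → t ≤ ‖y ω‖ := by
  have hyg := hy.ae_eq_mk
  obtain ⟨k, hk⟩ : ∃ k : ℕ, μ {ω | 1 / ((k : ℝ) + 1) ≤ ‖hy.mk y ω‖} ≠ 0 := by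
    by_contra! h
    refine hy0 ?_
    have hsmall : ∀ᵐ ω ∂μ, ∀ k : ℕ, ¬ 1 / ((k : ℝ) + 1) ≤ ‖hy.mk y ω‖ :=
      ae_all_iff.2 fun k => measure_eq_zero_iff_ae_notMem.1 (h k)
    filter_upwards [hyg, hsmall] with ω hω hsmallω
    rw [hω, Pi.zero_apply, ← norm_le_zero_iff]
    by_contra! hpos
    obtain ⟨k, hk⟩ := exists_nat_one_div_lt hpos
    exact hsmallω k hk.le
  refine ⟨_, 1 / ((k : ℝ) + 1), hy.stronglyMeasurable_mk.norm.measurable measurableSet_Ici,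
    pos_iff_ne_zero.2 hk, by positivity, hyg.mono fun ω h hω => ?_⟩
  rw [h]
  exact hω

theorem exists_eventually_le_eLpNorm_indicator [IsFiniteMeasure μ] {F : Type*}
    [NormedAddCommGroup F] {A : ℕ → Set Ω} (hA : ∀ i, MeasurableSet (A i)) {P : ℝ} (hP : 0 < P)
    (hlim : ∀ E, MeasurableSet E → Tendsto (fun i => μ.real (A i ∩ E)) atTop (𝓝 (P * μ.real E)))
    {y : Ω → F} (hy : AEStronglyMeasurable y μ) (hy0 : ¬ y =ᵐ[μ] 0) {p : ℝ≥0∞} (hp0 : p ≠ 0)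
    (hp : p ≠ ∞) : ∃ ε ≠ 0, ∀ᶠ i in atTop, ε ≤ eLpNorm ((A i).indicator y) p μ := by
  obtain ⟨E, t, hE, hE0, ht, hyE⟩ := exists_measurableSet_measure_pos_le_norm hy hy0
  have hPE : 0 < P * μ.real E := mul_pos hP (ENNReal.toReal_pos hE0.ne' (measure_ne_top μ E))
  refine ⟨ENNReal.ofReal t * ENNReal.ofReal (P * μ.real E / 2) ^ (1 / p.toReal),
    mul_ne_zero (ENNReal.ofReal_pos.2 ht).ne'
      (ENNReal.rpow_pos (ENNReal.ofReal_pos.2 (half_pos hPE)) ENNReal.ofReal_ne_top).ne', ?_⟩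
  filter_upwards [(hlim E hE).eventually (eventually_gt_nhds (half_lt_self hPE))] with i hi
  calc _ ≤ ‖t‖ₑ * μ (A i ∩ E) ^ (1 / p.toReal) := by
        rw [Real.enorm_of_nonneg ht.le]
        gcongr
        exact ENNReal.ofReal_le_of_le_toReal hi.le
    _ = eLpNorm ((A i ∩ E).indicator fun _ => t) p μ :=
        (eLpNorm_indicator_const ((hA i).inter hE) hp0 hp).symm
    _ ≤ eLpNorm ((A i).indicator y) p μ := by
        refine eLpNorm_mono_ae (hyE.mono fun ω hω => ?_)
        by_cases h : ω ∈ A i ∩ E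
        · simpa [h.1, h, abs_of_pos ht] using hω h.2
        · simp [h]

theorem eLpNorm_indicator_le_eLpNorm_sub {F : Type*} [NormedAddCommGroup F] {s : Set Ω}
    {y w : Ω → F} (hw : ∀ᵐ ω ∂μ, ω ∈ s → w ω = 0) (p : ℝ≥0∞) :
    eLpNorm (s.indicator y) p μ ≤ eLpNorm (y - w) p μ :=
  eLpNorm_mono_ae (hw.mono fun ω hω => by by_cases h : ω ∈ s <;> simp [h, hω])

theorem edist_toLp_indicator_compl {F : Type*} [NormedAddCommGroup F] {p : ℝ≥0∞}
    (f : Lp F p μ) {s : Set Ω} (hs : MeasurableSet s) :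
    edist (((Lp.memLp f).indicator hs.compl).toLp _) f = eLpNorm (s.indicator f) p μ := by
  have hf : ⇑(((Lp.memLp f).indicator hs.compl).toLp _) =ᵐ[μ] sᶜ.indicator f :=
    MemLp.coeFn_toLp _
  rw [Lp.edist_def, ← eLpNorm_neg]
  refine eLpNorm_congr_ae (hf.mono fun ω hω => ?_)
  rw [Pi.neg_apply, Pi.sub_apply, hω, indicator_compl, Pi.sub_apply, neg_sub, sub_sub_cancel]

/-- Absence of atoms in the measure-theoretic sense: stronger than Mathlib's `NoAtoms`, which only
asks singletons to be null. -/
def Measure.IsNonatomic (μ : Measure Ω) : Prop :=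
  ∀ A : Set Ω, MeasurableSet A → 0 < μ A →
    ∃ B : Set Ω, MeasurableSet B ∧ B ⊆ A ∧ μ B ≠ 0 ∧ μ B ≠ μ A

namespace Measure.IsNonatomic

variable [IsFiniteMeasure μ]

theorem exists_subset_measure_pos_le_half (hμ : μ.IsNonatomic) {S : Set Ω}
    (hS : MeasurableSet S) (h0 : 0 < μ S) :
    ∃ B ⊆ S, MeasurableSet B ∧ 0 < μ B ∧ μ B ≤ μ S / 2 := by
  obtain ⟨B, hB, hBS, hB0, hBS'⟩ := hμ S hS h0
  have hdiff : μ (S \ B) = μ S - μ B := measure_sdiff hBS hB.nullMeasurableSet (measure_ne_top μ B)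
  by_cases hhalf : μ B ≤ μ S / 2
  · exact ⟨B, hBS, hB, pos_iff_ne_zero.2 hB0, hhalf⟩
  refine ⟨S \ B, sdiff_subset, hS.diff hB, ?_, ?_⟩
  · exact hdiff ▸ tsub_pos_of_lt ((measure_mono hBS).lt_of_ne hBS')
  · rw [hdiff, tsub_le_iff_right]
    calc μ S = μ S / 2 + μ S / 2 := (ENNReal.add_halves _).symm
      _ ≤ μ S / 2 + μ B := by gcongr; exact (not_le.1 hhalf).le

theorem exists_subset_measure_pos_le (hμ : μ.IsNonatomic) {S : Set Ω}
    (hS : MeasurableSet S) (h0 : 0 < μ S) {ε : ℝ≥0∞} (hε : ε ≠ 0) :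
    ∃ B ⊆ S, MeasurableSet B ∧ 0 < μ B ∧ μ B ≤ ε := by
  have halving : ∀ k : ℕ, ∃ B ⊆ S, MeasurableSet B ∧ 0 < μ B ∧ μ B ≤ 2⁻¹ ^ k * μ S := by
    intro k
    induction k with
    | zero => exact ⟨S, subset_rfl, hS, h0, by simp⟩
    | succ k ih =>
      obtain ⟨B, hBS, hB, hB0, hBk⟩ := ih
      obtain ⟨C, hCB, hC, hC0, hCB'⟩ := hμ.exists_subset_measure_pos_le_half hB hB0
      refine ⟨C, hCB.trans hBS, hC, hC0, hCB'.trans ?_⟩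
      rw [pow_succ', mul_assoc, ENNReal.div_eq_inv_mul]
      gcongr
  obtain ⟨k, hk⟩ := ENNReal.exists_inv_two_pow_lt (ENNReal.div_pos hε (measure_ne_top μ S)).ne'
  obtain ⟨B, hBS, hB, hB0, hBk⟩ := halving k
  refine ⟨B, hBS, hB, hB0, hBk.trans ?_⟩
  calc 2⁻¹ ^ k * μ S ≤ μ S * (ε / μ S) := by rw [mul_comm]; gcongr
    _ ≤ ε := ENNReal.mul_div_le

theorem exists_subset_measure_eq (hμ : μ.IsNonatomic) {S : Set Ω} (hS : MeasurableSet S)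
    {s : ℝ≥0∞} (hs : s ≤ μ S) : ∃ B ⊆ S, MeasurableSet B ∧ μ B = s := by
  have hs_top : s ≠ ∞ := ne_top_of_le_ne_top (measure_ne_top μ S) hs
  obtain ⟨c, hmono, hc, hgain⟩ := exists_greedy_chain (μ := μ) (S := S) hs_top
  have hLS : (⋃ n, c n) ⊆ S := iUnion_subset fun n => (hc n).1
  have hL : MeasurableSet (⋃ n, c n) := .iUnion fun n => (hc n).2.1
  have hLs : μ (⋃ n, c n) ≤ s := hmono.measure_iUnion ▸ iSup_le fun n => (hc n).2.2
  refine ⟨⋃ n, c n, hLS, hL, le_antisymm hLs (not_lt.1 fun hlt => ?_)⟩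
  -- A piece `D` of `S \ ⋃ c` small enough to fit is admissible at every step, so each step
  -- gains at least `μ D / 2`, which is impossible below the finite bound `s`.
  have hSL : 0 < μ (S \ ⋃ n, c n) := by
    rw [measure_sdiff hLS hL.nullMeasurableSet (measure_ne_top _ _)]
    exact tsub_pos_of_lt (hlt.trans_le hs)
  obtain ⟨D, hDS, hD, hD0, hDs⟩ :=
    hμ.exists_subset_measure_pos_le (hS.diff hL) hSL (tsub_pos_of_lt hlt).ne'
  have hgrow : ∀ n : ℕ, n * (μ D / 2) ≤ μ (c n) := by
    intro n
    induction n with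
    | zero => simp
    | succ n ih =>
      have hfit : μ (c n) + μ D ≤ s :=
        (add_le_add (measure_mono (subset_iUnion c n)) hDs).trans (add_tsub_cancel_of_le hLs).le
      calc ((n + 1 : ℕ) : ℝ≥0∞) * (μ D / 2) = n * (μ D / 2) + μ D / 2 := by push_cast; ring
        _ ≤ μ (c n) + μ D / 2 := by gcongr
        _ ≤ μ (c (n + 1)) :=
          hgain n D (hDS.trans (sdiff_subset_sdiff_right (subset_iUnion c n))) hD hfit
  obtain ⟨n, hn⟩ := ENNReal.exists_nat_mul_gt (ENNReal.half_pos hD0.ne').ne' hs_top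
  exact (hn.trans_le (hgrow n)).not_ge (hc n).2.2

theorem exists_seq_measure_inter_eq (hμ : μ.IsNonatomic) {q : ℝ≥0∞} (hq : q ≤ 1) :
    ∃ A : ℕ → Set Ω, (∀ i, MeasurableSet (A i)) ∧ (∀ i, μ (A i) = q * μ univ) ∧
      Pairwise fun i j => μ (A i ∩ A j) = q ^ 2 * μ univ := by
  choose! B hBS hB hBq using fun S (hS : MeasurableSet S) =>
    hμ.exists_subset_measure_eq hS (mul_le_of_le_one_left' hq : q * μ S ≤ μ S)
  have hp : ∀ S, MeasurableSet S → MeasurableSet (S ∩ B S) ∧ μ (S ∩ B S) = q * μ S :=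
    fun S hS => by rw [inter_eq_right.2 (hBS S hS)]; exact ⟨hB S hS, hBq S hS⟩
  exact ⟨fun i => splitSeq (fun S => S ∩ B S) i univ,
    fun i => measurableSet_splitSeq (fun S hS => (hp S hS).1) i .univ,
    fun i => measure_splitSeq (fun _ => inter_subset_left) hp i .univ,
    fun i j hij => measure_splitSeq_inter (fun _ => inter_subset_left) hp hij .univ⟩

theorem exists_seq_measure_le_tendsto (hμ : μ.IsNonatomic) {ε : ℝ≥0∞} (hε : ε ≠ 0) :
    ∃ (A : ℕ → Set Ω) (P : ℝ), 0 < P ∧ (∀ i, MeasurableSet (A i)) ∧ (∀ i, μ (A i) ≤ ε) ∧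
      ∀ E, MeasurableSet E → Tendsto (fun i => μ.real (A i ∩ E)) atTop (𝓝 (P * μ.real E)) := by
  set q := min 1 (ε / μ univ)
  have hq1 : q ≤ 1 := min_le_left _ _
  have hq0 : q ≠ 0 := by simp [q, hε, ENNReal.div_eq_zero_iff, measure_ne_top]
  obtain ⟨A, hA, hAi, hAij⟩ := hμ.exists_seq_measure_inter_eq hq1
  refine ⟨A, q.toReal, ENNReal.toReal_pos hq0 (ne_top_of_le_ne_top ENNReal.one_ne_top hq1), hA,
    fun i => ?_, fun E hE => tendsto_measureReal_inter_of_pairwise hA (fun i => ?_)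
      (fun i j hij => ?_) hE⟩
  · calc μ (A i) ≤ μ univ * (ε / μ univ) := by rw [hAi, mul_comm]; gcongr; exact min_le_right _ _
      _ ≤ ε := ENNReal.mul_div_le
  · simp [Measure.real, hAi, ENNReal.toReal_mul]
  · simp [Measure.real, hAij hij, ENNReal.toReal_mul, ENNReal.toReal_pow]

end Measure.IsNonatomic

end MeasureTheory

/-- If a finite measure `μ` has no atoms, then the algebra of all multiplication operators
by bounded measurable functions on `L²(μ)` is not localizing. -/
theorem not_localizing_Linfty_of_no_atoms
    {Ω : Type*} [MeasurableSpace Ω] (μ : Measure Ω) [IsFiniteMeasure μ]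
    (hNoAtoms : ∀ A : Set Ω, MeasurableSet A → 0 < μ A →
      ∃ B : Set Ω, MeasurableSet B ∧ B ⊆ A ∧ μ B ≠ 0 ∧ μ B ≠ μ A) :
    ¬ IsLocalizing {X : Lp ℂ 2 μ →L[ℂ] Lp ℂ 2 μ |
        ∃ φ : Ω → ℂ, Measurable φ ∧ (∃ C : ℝ, ∀ ω, ‖φ ω‖ ≤ C) ∧
          ∀ f : Lp ℂ 2 μ, ⇑(X f) =ᵐ[μ] fun ω => φ ω * f ω} := by
  rintro ⟨c, r, hr, -, hloc⟩
  obtain ⟨δ, hδ, hcδ⟩ := (Lp.memLp c).eLpNorm_indicator_le one_le_two ENNReal.ofNat_ne_top hr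
  obtain ⟨A, P, hP, hA, hAδ, hAlim⟩ :=
    Measure.IsNonatomic.exists_seq_measure_le_tendsto hNoAtoms (ENNReal.ofReal_pos.2 hδ).ne'
  let x : ℕ → Lp ℂ 2 μ := fun i => ((Lp.memLp c).indicator (hA i).compl).toLp _
  have hx : ∀ i, ⇑(x i) =ᵐ[μ] (A i)ᶜ.indicator c := fun i => MemLp.coeFn_toLp _
  have hxc : ∀ i, x i ∈ Metric.closedBall c r := fun i => by
    rw [Metric.mem_closedBall, ← edist_le_ofReal hr.le, edist_toLp_indicator_compl c (hA i)]
    exact hcδ _ (hA i) (hAδ i)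
  obtain ⟨n, X, y, hn, hX, -, hy, hXy⟩ := hloc x hxc
  obtain ⟨ε, hε, hεy⟩ := exists_eventually_le_eLpNorm_indicator hA hP hAlim
    (Lp.aestronglyMeasurable y) (fun h => hy (Lp.eq_zero_iff_ae_eq_zero.2 h)) two_ne_zero
    ENNReal.ofNat_ne_top
  have hvanish : ∀ j, ∀ᵐ ω ∂μ, ω ∈ A (n j) → X j (x (n j)) ω = 0 := fun j => by
    obtain ⟨φ, -, -, hφ⟩ := hX j
    filter_upwards [hφ (x (n j)), hx (n j)] with ω hφω hxω hω
    rw [hφω, hxω, indicator_of_notMem (notMem_compl_iff.2 hω), mul_zero]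
  have hdist : Tendsto (fun j => edist y (X j (x (n j)))) atTop (𝓝 0) := by
    simpa only [edist_comm] using tendsto_iff_edist_tendsto_0.1 hXy
  refine hε (nonpos_iff_eq_zero.1 (ge_of_tendsto hdist ?_))
  filter_upwards [hn.tendsto_atTop.eventually hεy] with j hj
  rw [Lp.edist_def]
  exact hj.trans (eLpNorm_indicator_le_eLpNorm_sub (hvanish j) 2)
end

section
/- Let μ be the normalized Haar measure on the torus 𝕋, let A ⊆ 𝕋 be a measurable set with μ(A) > 0, let (n_j) be a strictly increasing sequence of positive integers, and set A_j = {z ∈ 𝕋 : z^{n_j} ∈ A}. Then μ(⋂_{k≥1} ⋃_{j≥k} A_j) = 1, i.e. almost every z ∈ 𝕋 belongs to infinitely many of the sets A_j. -/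
open Filter Topology MeasureTheory

noncomputable instance : MeasurableSpace Circle := borel Circle
instance : BorelSpace Circle := ⟨rfl⟩

/-!
The maps `z ↦ z ^ N` preserve Haar measure and become mixing as `N → ∞`: for measurable `A` and `E`,
`μ (E ∩ {z | z ^ N ∈ A}) → μ E * μ A`. In `L²(μ)` this is the weak convergence
`⟪g, f ∘ (· ^ N)⟫ → ⟪g, 1⟫ * ⟪1, f⟫`. For a character `f = z ^ a` with `a ≠ 0` the functions
`f ∘ (· ^ N) = z ^ (N * a)` run through distinct members of an orthonormal family, so Bessel's
inequality forces the inner products to `0`; since the characters span a dense subspace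
(Stone–Weierstrass) and composition with `z ↦ z ^ N` is an isometry, the convergence extends to all
of `L²(μ)`. Taking for `E` the set of points lying in no `A_j` with `j ≥ k`, the intersection is
eventually empty, so `μ E * μ A = 0` and hence `μ E = 0`.
-/

open Set Submodule ComplexConjugate

noncomputable instance : RootableBy Circle ℤ :=
  rootableByOfPowLeftSurj _ _ fun {n} hn z => ⟨Circle.exp (Complex.arg z / n), by
    show _ ^ n = z
    rw [← Circle.exp_intCast_mul, mul_div_cancel₀ _ (Int.cast_ne_zero.2 hn), Circle.exp_arg]⟩

theorem measurePreserving_circle_pow (μ : Measure Circle) [μ.IsHaarMeasure] {N : ℕ}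
    (hN : N ≠ 0) :
    MeasurePreserving (fun z : Circle => z ^ N) μ μ := by
  simpa only [zpow_natCast] using Measure.measurePreserving_zpow μ (Int.natCast_ne_zero.2 hN)

noncomputable def circleChar (m : ℤ) : C(Circle, ℂ) :=
  ⟨fun z => ((z ^ m : Circle) : ℂ), continuous_subtype_val.comp (continuous_zpow m)⟩

@[simp] theorem circleChar_apply (m : ℤ) (z : Circle) : circleChar m z = (z : ℂ) ^ m := rfl

theorem circleChar_add (a b : ℤ) : circleChar (a + b) = circleChar a * circleChar b := by
  ext z; simp [zpow_add₀ (Circle.coe_ne_zero z)]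

theorem star_circleChar (m : ℤ) : star (circleChar m) = circleChar (-m) := by
  ext z
  simp [← Circle.coe_inv_eq_conj]

theorem integral_circleChar (μ : Measure Circle) [μ.IsMulLeftInvariant] {m : ℤ} (hm : m ≠ 0) :
    ∫ z, circleChar m z ∂μ = 0 := by
  refine integral_eq_zero_of_mul_left_eq_neg (g := Circle.exp (Real.pi / m)) fun z => ?_
  rw [circleChar_apply, circleChar_apply, Circle.coe_mul, mul_zpow, ← Circle.coe_zpow,
    ← Circle.exp_intCast_mul, mul_div_cancel₀ _ (Int.cast_ne_zero.2 hm)]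
  simp [Circle.coe_exp, Complex.exp_pi_mul_I]

noncomputable def trigPolynomial : StarSubalgebra ℂ C(Circle, ℂ) where
  toSubalgebra := Algebra.adjoin ℂ (range circleChar)
  star_mem' := by
    change Algebra.adjoin ℂ (range circleChar) ≤ star (Algebra.adjoin ℂ (range circleChar))
    refine Algebra.adjoin_le ?_
    rintro - ⟨m, rfl⟩
    exact Algebra.subset_adjoin ⟨-m, (star_circleChar m).symm⟩

theorem trigPolynomial_toSubmodule :
    Subalgebra.toSubmodule trigPolynomial.toSubalgebra = span ℂ (range circleChar) := by
  refine Algebra.adjoin_eq_span_of_subset _ (Subset.trans ?_ subset_span)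
  intro x hx
  refine Submonoid.closure_induction (fun _ => id) ⟨0, ?_⟩ ?_ hx
  · ext z; simp
  · rintro - - - - ⟨a, rfl⟩ ⟨b, rfl⟩
    exact ⟨a + b, circleChar_add a b⟩

theorem span_circleChar_closure_eq_top :
    (span ℂ (range circleChar)).topologicalClosure = ⊤ := by
  have hsep : trigPolynomial.SeparatesPoints := by
    intro z w hzw
    refine ⟨_, ⟨circleChar 1, Algebra.subset_adjoin ⟨1, rfl⟩, rfl⟩, ?_⟩
    simpa [Circle.coe_inj] using hzw
  rw [← trigPolynomial_toSubmodule]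
  exact congr_arg (Subalgebra.toSubmodule <| StarSubalgebra.toSubalgebra ·)
    (ContinuousMap.starSubalgebra_topologicalClosure_eq_top_of_separatesPoints _ hsep)

theorem Orthonormal.tendsto_inner_cofinite_zero {𝕜 E ι : Type*} [RCLike 𝕜] [NormedAddCommGroup E]
    [InnerProductSpace 𝕜 E] {v : ι → E} (hv : Orthonormal 𝕜 v) (x : E) :
    Tendsto (fun i => inner 𝕜 x (v i)) cofinite (𝓝 0) := by
  rw [tendsto_zero_iff_norm_tendsto_zero]
  have hsq := (hv.inner_products_summable (x := x)).tendsto_cofinite_zero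
  have := (Real.continuous_sqrt.tendsto 0).comp hsq
  simp only [Function.comp_def, Real.sqrt_zero, norm_nonneg, Real.sqrt_sq] at this
  simpa only [norm_inner_symm] using this

theorem tendsto_apply_of_closure_span_eq_top {ι 𝕜 E F : Type*} [NontriviallyNormedField 𝕜]
    [NormedAddCommGroup E] [NormedSpace 𝕜 E] [NormedAddCommGroup F] [NormedSpace 𝕜 F]
    {l : Filter ι} {T : ι → E →L[𝕜] F} {C : ℝ} (hT : ∀ i, ‖T i‖ ≤ C) (L : E →L[𝕜] F) {s : Set E}
    (hs : (span 𝕜 s).topologicalClosure = ⊤) (h : ∀ x ∈ s, Tendsto (fun i => T i x) l (𝓝 (L x)))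
    (x : E) : Tendsto (fun i => T i x) l (𝓝 (L x)) := by
  let V : Submodule 𝕜 E :=
    { carrier := {x | Tendsto (fun i => T i x) l (𝓝 (L x))}
      add_mem' := fun hx hy => by simpa using hx.add hy
      zero_mem' := by simpa using tendsto_const_nhds
      smul_mem' := fun c x hx => by simpa using hx.const_smul c }
  have hequi : Equicontinuous ((↑) ∘ T : ι → E → F) := by
    have := (NormedSpace.equicontinuous_TFAE T).out 5 1
    exact this.1 ⟨C, hT⟩
  have hV : IsClosed (V : Set E) := hequi.isClosed_setOfPred_tendsto L.continuous
  have : (⊤ : Submodule 𝕜 E) ≤ V := hs ▸ (span 𝕜 s).topologicalClosure_minimal (span_le.2 h) hV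
  exact this trivial

section L2

variable (μ : Measure Circle)

noncomputable abbrev circleCharLp [IsFiniteMeasure μ] (m : ℤ) : Lp ℂ 2 μ :=
  ContinuousMap.toLp 2 μ ℂ (circleChar m)

theorem orthonormal_circleCharLp [μ.IsMulLeftInvariant] [IsProbabilityMeasure μ] :
    Orthonormal ℂ (circleCharLp μ) := by
  rw [orthonormal_iff_ite]
  intro i j
  rw [ContinuousMap.inner_toLp]
  have (z : Circle) : circleChar j z * conj (circleChar i z) = circleChar (j - i) z := by
    rw [sub_eq_add_neg, circleChar_add, ← star_circleChar]; rfl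
  simp_rw [this]
  split_ifs with h
  · simp [h]
  · exact integral_circleChar μ (sub_ne_zero.2 (Ne.symm h))

theorem span_circleCharLp_closure_eq_top [IsFiniteMeasure μ] :
    (span ℂ (range (circleCharLp μ))).topologicalClosure = ⊤ := by
  convert! (ContinuousMap.toLp_denseRange ℂ μ ℂ (p := 2) ENNReal.ofNat_ne_top)
    |>.topologicalClosure_map_submodule span_circleChar_closure_eq_top
  rw [map_span, ← range_comp]
  rfl

theorem compMeasurePreserving_circleCharLp [μ.IsHaarMeasure] [IsFiniteMeasure μ] {N : ℕ}
    (hN : N ≠ 0) (a : ℤ) :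
    Lp.compMeasurePreserving (fun z : Circle => z ^ N) (measurePreserving_circle_pow μ hN)
      (circleCharLp μ a) = circleCharLp μ (N * a) := by
  refine Lp.ext ((Lp.coeFn_compMeasurePreserving _ _).trans ?_)
  filter_upwards [(measurePreserving_circle_pow μ hN).quasiMeasurePreserving.ae_eq_comp
    (ContinuousMap.coeFn_toLp (p := 2) (𝕜 := ℂ) μ (circleChar a)),
    ContinuousMap.coeFn_toLp (p := 2) (𝕜 := ℂ) μ (circleChar (N * a))] with z h1 h2
  rw [h1, h2]
  simp [zpow_mul]

theorem circleCharLp_zero [IsFiniteMeasure μ] :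
    circleCharLp μ 0 = indicatorConstLp 2 MeasurableSet.univ (measure_ne_top μ univ) 1 := by
  refine Lp.ext ((ContinuousMap.coeFn_toLp μ _).trans ?_)
  filter_upwards [indicatorConstLp_coeFn (p := 2) (hs := MeasurableSet.univ)
    (hμs := measure_ne_top μ univ) (c := (1 : ℂ))] with z hz
  rw [hz]
  simp

theorem tendsto_inner_compMeasurePreserving_pow [μ.IsHaarMeasure] [IsProbabilityMeasure μ]
    {m : ℕ → ℕ} (hm : Tendsto m atTop atTop) (hm0 : ∀ j, m j ≠ 0) (f g : Lp ℂ 2 μ) :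
    Tendsto (fun j => inner ℂ g
        (Lp.compMeasurePreserving _ (measurePreserving_circle_pow μ (hm0 j)) f)) atTop
      (𝓝 (inner ℂ g (circleCharLp μ 0) * inner ℂ (circleCharLp μ 0) f)) := by
  let T (j : ℕ) : Lp ℂ 2 μ →L[ℂ] ℂ := (innerSL ℂ g).comp
    (Lp.compMeasurePreservingₗᵢ ℂ _ (measurePreserving_circle_pow μ (hm0 j))).toContinuousLinearMap
  have hT (j : ℕ) : ‖T j‖ ≤ ‖g‖ := by
    refine (ContinuousLinearMap.opNorm_comp_le _ _).trans ?_
    rw [innerSL_apply_norm]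
    exact mul_le_of_le_one_right (norm_nonneg g) (LinearIsometry.norm_toContinuousLinearMap_le _)
  refine tendsto_apply_of_closure_span_eq_top hT
    (inner ℂ g (circleCharLp μ 0) • innerSL ℂ (circleCharLp μ 0))
    (span_circleCharLp_closure_eq_top μ) ?_ f
  rintro _ ⟨a, rfl⟩
  have hTa (j : ℕ) : T j (circleCharLp μ a) = inner ℂ g (circleCharLp μ (m j * a)) :=
    congrArg (inner ℂ g) (compMeasurePreserving_circleCharLp μ (hm0 j) a)
  simp only [hTa, smul_apply, coe_innerSL_apply, smul_eq_mul]
  rcases eq_or_ne a 0 with rfl | ha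
  · simp [inner_self_eq_norm_sq_to_K, (orthonormal_circleCharLp μ).1 0]
  · rw [(orthonormal_circleCharLp μ).inner_eq_zero ha.symm, mul_zero]
    have hinj : Function.Injective fun N : ℕ => (N : ℤ) * a :=
      (mul_left_injective₀ ha).comp Nat.cast_injective
    have hma : Tendsto (fun j => (m j : ℤ) * a) atTop cofinite :=
      hinj.tendsto_cofinite.comp (hm.mono_right Nat.cofinite_eq_atTop.ge)
    exact ((orthonormal_circleCharLp μ).tendsto_inner_cofinite_zero g).comp hma

theorem tendsto_measureReal_inter_preimage_pow [μ.IsHaarMeasure] [IsProbabilityMeasure μ]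
    {m : ℕ → ℕ} (hm : Tendsto m atTop atTop) (hm0 : ∀ j, m j ≠ 0) {A E : Set Circle}
    (hA : MeasurableSet A) (hE : MeasurableSet E) :
    Tendsto (fun j => μ.real (E ∩ (· ^ m j) ⁻¹' A)) atTop (𝓝 (μ.real E * μ.real A)) := by
  have h := tendsto_inner_compMeasurePreserving_pow μ hm hm0
    (indicatorConstLp 2 hA (measure_ne_top μ A) (1 : ℂ))
    (indicatorConstLp 2 hE (measure_ne_top μ E) (1 : ℂ))
  simp only [Lp.indicatorConstLp_compMeasurePreserving, circleCharLp_zero,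
    L2.inner_indicatorConstLp_one_indicatorConstLp_one, inter_univ, univ_inter] at h
  exact tendsto_ofReal_iff.1 (by exact_mod_cast h)

end L2

theorem measure_limsup_eq_one_of_tendsto_measureReal_inter {Ω : Type*} [MeasurableSpace Ω]
    {μ : Measure Ω} [IsProbabilityMeasure μ] {s : ℕ → Set Ω} (hs : ∀ j, MeasurableSet (s j))
    {c : ℝ} (hc : c ≠ 0)
    (h : ∀ E, MeasurableSet E → Tendsto (fun j => μ.real (E ∩ s j)) atTop (𝓝 (μ.real E * c))) :
    μ (⋂ k, ⋃ j, ⋃ (_ : k ≤ j), s j) = 1 := by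
  have hB (k : ℕ) : MeasurableSet (⋃ j, ⋃ (_ : k ≤ j), s j) :=
    .iUnion fun j => .iUnion fun _ => hs j
  rw [← prob_compl_eq_zero_iff (.iInter hB), compl_iInter]
  refine measure_iUnion_null fun k => ?_
  have hlim : Tendsto (fun j => μ.real ((⋃ j, ⋃ (_ : k ≤ j), s j)ᶜ ∩ s j)) atTop (𝓝 0) := by
    refine tendsto_const_nhds.congr' ((eventually_ge_atTop k).mono fun j hj => ?_)
    have hsj : s j ⊆ ⋃ j, ⋃ (_ : k ≤ j), s j :=
      subset_iUnion₂ (s := fun i (_ : k ≤ i) => s i) j hj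
    dsimp only
    rw [(disjoint_compl_left.mono_right hsj).inter_eq, measureReal_empty]
  have := tendsto_nhds_unique (h _ (hB k).compl) hlim
  rwa [mul_eq_zero, or_iff_left hc, measureReal_eq_zero_iff] at this

/-- If `A ⊆ 𝕋` is measurable with `μ(A) > 0` for the normalized Haar measure `μ`, and
`(n_j)` is a strictly increasing sequence of positive integers, then almost every `z ∈ 𝕋`
satisfies `z ^ (n_j) ∈ A` for infinitely many `j`. -/
theorem haar_measure_liminf_pow_preimage
    (μ : Measure Circle) [μ.IsHaarMeasure] [IsProbabilityMeasure μ]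
    (A : Set Circle) (hA : MeasurableSet A) (hA0 : 0 < μ A)
    (n : ℕ → ℕ) (hn : StrictMono n) (hn0 : ∀ j, 0 < n j) :
    μ (⋂ k : ℕ, ⋃ j : ℕ, ⋃ (_ : k ≤ j), {z : Circle | z ^ (n j) ∈ A}) = 1 :=
  measure_limsup_eq_one_of_tendsto_measureReal_inter
    (fun j => hA.preimage (continuous_pow (n j)).measurable)
    ((measureReal_ne_zero_iff (measure_ne_top μ A)).2 hA0.ne') fun _ hE =>
      tendsto_measureReal_inter_preimage_pow μ hn.tendsto_atTop (fun j => (hn0 j).ne') hA hE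
end

section
/- For every δ with 0 < δ < 1 there exist an open set U ⊆ ℂ containing the closed unit disc and a holomorphic function h on U such that: (1) h(1) = 0; (2) |h(z)| ≤ 1 for every z in the closed unit disc; and (3) μ({z ∈ 𝕋 : |h(z) − 1| > δ}) < δ, where μ is the normalized Haar measure on the unit circle 𝕋. -/
open Filter Topology MeasureTheory

/-!
The Möbius map `h z = (z - 1) / (z - r)` with `r > 1` vanishes at `1` and has modulus at most `1`
on the closed disc, whose points all lie at least as close to `1` as to `r`. On the circle,
`h z - 1 = (r - 1) / (z - r)` exceeds `δ` only when `z` is within `(r - 1) (δ⁻¹ + 1)` of `1`.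
A Haar measure on the circle is finite and has no atoms, so such arcs have measure below `δ`
once `r` is close enough to `1`.
-/

open Metric

instance : Nontrivial Circle := ⟨⟨-1, 1, Circle.neg_ne_self 1⟩⟩

lemma exists_measure_closedBall_lt {α : Type*} [MetricSpace α] [MeasurableSpace α]
    [OpensMeasurableSpace α] [ProperSpace α] (μ : Measure α) [IsFiniteMeasureOnCompacts μ]
    [NullSingletonClass μ] (x : α) {c : ENNReal} (hc : 0 < c) :
    ∃ ε > 0, μ (closedBall x ε) < c := by
  have hlim : Tendsto (fun ε => μ (cthickening ε {x})) (𝓝[>] 0) (𝓝 0) := by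
    simpa using (tendsto_measure_cthickening_of_isCompact (μ := μ) isCompact_singleton).mono_left
      nhdsWithin_le_nhds
  obtain ⟨ε, hε, hμ⟩ := ((hlim.eventually (gt_mem_nhds hc)).and self_mem_nhdsWithin).exists
  exact ⟨ε, hμ, (measure_mono (closedBall_subset_cthickening_singleton x ε)).trans_lt hε⟩

lemma Complex.ofReal_ne_of_norm_lt {z : ℂ} {r : ℝ} (h : ‖z‖ < r) : z ≠ r := by
  rintro rfl
  exact (Real.le_norm_self r).not_gt (by simpa using h)

lemma Complex.norm_sub_one_le_norm_sub_ofReal {z : ℂ} {r : ℝ} (hz : ‖z‖ ≤ 1) (hr : 1 ≤ r) :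
    ‖z - 1‖ ≤ ‖z - r‖ := by
  have hre : z.re ≤ 1 := (Complex.re_le_norm z).trans hz
  rw [Complex.norm_def, Complex.norm_def]
  gcongr
  simp only [Complex.normSq_apply, Complex.sub_re, Complex.sub_im, Complex.one_re,
    Complex.one_im, Complex.ofReal_re, Complex.ofReal_im]
  nlinarith

lemma Complex.norm_sub_one_lt_of_lt_norm_div_sub_one {z w : ℂ} {δ : ℝ} (hδ : 0 < δ) (hzw : z ≠ w)
    (h : δ < ‖(z - 1) / (z - w) - 1‖) : ‖z - 1‖ < ‖w - 1‖ * (δ⁻¹ + 1) := by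
  have hzw' : z - w ≠ 0 := sub_ne_zero.2 hzw
  have hdiv : (z - 1) / (z - w) - 1 = (w - 1) / (z - w) := by field_simp; ring
  rw [hdiv, norm_div, lt_div_iff₀ (norm_pos_iff.2 hzw')] at h
  have hzw_lt : ‖z - w‖ < ‖w - 1‖ * δ⁻¹ := by
    rw [← div_eq_mul_inv, lt_div_iff₀ hδ, mul_comm]; exact h
  calc ‖z - 1‖ = ‖(z - w) + (w - 1)‖ := by ring_nf
    _ ≤ ‖z - w‖ + ‖w - 1‖ := norm_add_le _ _
    _ < ‖w - 1‖ * δ⁻¹ + ‖w - 1‖ := by gcongr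
    _ = ‖w - 1‖ * (δ⁻¹ + 1) := by ring

theorem exists_holomorphic_small_near_one_general
    (μ : Measure Circle) [μ.IsHaarMeasure]
    (δ : ℝ) (hδ0 : 0 < δ) :
    ∃ (U : Set ℂ) (h : ℂ → ℂ), IsOpen U ∧ Metric.closedBall (0 : ℂ) 1 ⊆ U ∧
      DifferentiableOn ℂ h U ∧ h 1 = 0 ∧
      (∀ z ∈ Metric.closedBall (0 : ℂ) 1, ‖h z‖ ≤ 1) ∧
      μ {z : Circle | δ < ‖h ↑z - 1‖} < ENNReal.ofReal δ := by
  obtain ⟨ε, hε, hμε⟩ := exists_measure_closedBall_lt μ 1 (ENNReal.ofReal_pos.2 hδ0)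
  set r : ℝ := 1 + ε / (δ⁻¹ + 1)
  have hr : 1 < r := lt_add_of_pos_right 1 (by positivity)
  refine ⟨ball 0 r, fun z => (z - 1) / (z - r), isOpen_ball, closedBall_subset_ball hr,
    ?_, by simp, fun z hz => ?_, (measure_mono fun z hz => ?_).trans_lt hμε⟩
  · refine DifferentiableOn.div (by fun_prop) (by fun_prop) fun z hz => sub_ne_zero.2 ?_
    exact Complex.ofReal_ne_of_norm_lt (mem_ball_zero_iff.1 hz)
  · rw [mem_closedBall_zero_iff] at hz
    rw [norm_div]
    exact div_le_one_of_le₀ (Complex.norm_sub_one_le_norm_sub_ofReal hz hr.le) (norm_nonneg _)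
  · have hzr : (z : ℂ) ≠ r := Complex.ofReal_ne_of_norm_lt ((Circle.norm_coe z).trans_lt hr)
    have hr1 : ‖(r : ℂ) - 1‖ = ε / (δ⁻¹ + 1) := by
      rw [← Complex.ofReal_one, ← Complex.ofReal_sub, Complex.norm_real, Real.norm_eq_abs,
        abs_of_pos (by linarith)]
      ring
    have hz1 := Complex.norm_sub_one_lt_of_lt_norm_div_sub_one hδ0 hzr hz
    rw [hr1, div_mul_cancel₀ _ (by positivity)] at hz1
    exact (dist_eq_norm (z : ℂ) 1).trans_le hz1.le

/-- For every `0 < δ < 1` there are an open set `U` containing the closed unit disc and a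
holomorphic function `h` on `U` with `h(1) = 0`, `|h| ≤ 1` on the closed unit disc, and
`μ{z ∈ 𝕋 : |h(z) − 1| > δ} < δ` for the normalized Haar measure `μ` on the circle. -/
theorem exists_holomorphic_small_near_one
    (μ : Measure Circle) [μ.IsHaarMeasure] [IsProbabilityMeasure μ]
    (δ : ℝ) (hδ0 : 0 < δ) (hδ1 : δ < 1) :
    ∃ (U : Set ℂ) (h : ℂ → ℂ), IsOpen U ∧ Metric.closedBall (0 : ℂ) 1 ⊆ U ∧
      DifferentiableOn ℂ h U ∧ h 1 = 0 ∧
      (∀ z ∈ Metric.closedBall (0 : ℂ) 1, ‖h z‖ ≤ 1) ∧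
      μ {z : Circle | δ < ‖h ↑z - 1‖} < ENNReal.ofReal δ :=
  exists_holomorphic_small_near_one_general μ δ hδ0
end

section
/- Let M_t be the position operator on the Banach space C[0,1] of continuous complex-valued functions on [0,1] with the supremum norm, defined by (M_t f)(t) = t f(t). If λ ∈ ℂ is an extended eigenvalue of M_t (i.e. there is a nonzero bounded operator X on C[0,1] with M_t X = λ X M_t), then λ is a real number with λ > 0. -/
/-!
If `λ ∉ (0, ∞)`, pick `c` with `Re c > 0` and `Re (c λ) ≤ 0`. For `t₀ ∈ (0, 1]` and a large
real `γ`, the functional `ψ = δ_{t₀} ∘ X` satisfies `ψ ∘ (γ + c λ M) = (γ + c t₀) ψ`, because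
`M X = λ X M`. By convexity of the norm `‖γ + c λ M‖ ≤ max γ |γ + c λ|`, and `Re (c λ) ≤ 0`
gives `|γ + c λ|² ≤ γ² + |c λ|² < (γ + Re (c t₀))² ≤ |γ + c t₀|²` once `γ` is large. An
eigenvalue of right composition by an operator is bounded by its norm, so `ψ = 0`. Thus every
`X f` vanishes on `(0, 1]`, hence on `[0, 1]`, and `X = 0`.
-/

open unitInterval

theorem ContinuousLinearMap.eq_zero_of_comp_eq_smul_of_norm_lt {𝕜 E F : Type*}
    [NontriviallyNormedField 𝕜] [NormedAddCommGroup E] [NormedSpace 𝕜 E]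
    [NormedAddCommGroup F] [NormedSpace 𝕜 F] {ψ : E →L[𝕜] F} {B : E →L[𝕜] E} {a : 𝕜}
    (hψ : ψ ∘L B = a • ψ) (hB : ‖B‖ < ‖a‖) : ψ = 0 := by
  have h : ‖a‖ * ‖ψ‖ ≤ ‖B‖ * ‖ψ‖ := by
    calc ‖a‖ * ‖ψ‖ = ‖ψ ∘L B‖ := by rw [hψ, norm_smul]
      _ ≤ ‖B‖ * ‖ψ‖ := (ψ.opNorm_comp_le B).trans_eq (mul_comm _ _)
  by_contra hψ0
  exact hB.not_ge (le_of_mul_le_mul_right h (norm_pos_iff.2 hψ0))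

theorem ContinuousMap.opNorm_le_of_apply_eq_mul {K 𝕜 : Type*} [TopologicalSpace K]
    [CompactSpace K] [NontriviallyNormedField 𝕜] {T : C(K, 𝕜) →L[𝕜] C(K, 𝕜)}
    {g : K → 𝕜} (hT : ∀ f t, T f t = g t * f t) {s : ℝ} (hs : 0 ≤ s) (hg : ∀ t, ‖g t‖ ≤ s) :
    ‖T‖ ≤ s :=
  T.opNorm_le_bound hs fun f => (ContinuousMap.norm_le _ (by positivity)).2 fun t => by
    rw [hT, norm_mul]
    exact mul_le_mul (hg t) (f.norm_coe_le_norm t) (norm_nonneg _) hs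

namespace Complex

theorem exists_re_pos_re_mul_nonpos {l : ℂ} (hl : ¬(l.im = 0 ∧ 0 < l.re)) :
    ∃ c : ℂ, 0 < c.re ∧ (c * l).re ≤ 0 := by
  by_cases him : l.im = 0
  · exact ⟨1, one_pos, by simpa using not_lt.1 fun h => hl ⟨him, h⟩⟩
  · exact ⟨⟨1, l.re / l.im⟩, one_pos, by simp [mul_re, div_mul_cancel₀ _ him]⟩

theorem norm_ofReal_add_mul_le_max {γ : ℝ} (hγ : 0 ≤ γ) (w : ℂ) {t : ℝ}
    (ht : t ∈ I) : ‖(γ : ℂ) + w * t‖ ≤ max γ ‖(γ : ℂ) + w‖ := by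
  have hseg : (γ : ℂ) + w * t ∈ segment ℝ (γ : ℂ) (γ + w) :=
    ⟨1 - t, t, by linarith [ht.2], ht.1, by ring, by simp [Complex.real_smul]; ring⟩
  simpa [abs_of_nonneg hγ] using (convexOn_norm convex_univ).le_on_segment trivial trivial hseg

theorem exists_norm_ofReal_add_lt {w a : ℂ} (hw : w.re ≤ 0) (ha : 0 < a.re) :
    ∃ γ : ℝ, 0 ≤ γ ∧ ‖(γ : ℂ) + w‖ < ‖(γ : ℂ) + a‖ := by
  set γ := (normSq w + 1) / a.re
  have hγa : γ * a.re = w.re * w.re + w.im * w.im + 1 := by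
    rw [div_mul_cancel₀ _ ha.ne', normSq_apply]
  have hγ : 0 ≤ γ := div_nonneg (add_nonneg (normSq_nonneg w) zero_le_one) ha.le
  refine ⟨γ, hγ, ?_⟩
  rw [← sq_lt_sq₀ (norm_nonneg _) (norm_nonneg _), Complex.sq_norm, Complex.sq_norm,
    normSq_apply, normSq_apply]
  simp only [add_re, add_im, ofReal_re, ofReal_im, zero_add]
  nlinarith [mul_nonpos_of_nonneg_of_nonpos hγ hw, sq_nonneg a.im, sq_nonneg a.re]

end Complex

namespace unitInterval

variable {M X : C(I, ℂ) →L[ℂ] C(I, ℂ)} {l : ℂ}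

theorem apply_eq_zero_of_comp_eq_smul_comp_position (hM : ∀ f t, M f t = ((t : ℝ) : ℂ) * f t)
    (hMX : M ∘L X = l • (X ∘L M)) {c : ℂ} (hc : 0 < c.re) (hcl : (c * l).re ≤ 0)
    {t₀ : I} (ht₀ : 0 < (t₀ : ℝ)) (f : C(I, ℂ)) : X f t₀ = 0 := by
  have hct₀ : 0 < (c * (t₀ : ℝ)).re := by simpa using mul_pos hc ht₀
  obtain ⟨γ, hγ, hlt⟩ := Complex.exists_norm_ofReal_add_lt hcl hct₀
  set B := (γ : ℂ) • (1 : C(I, ℂ) →L[ℂ] C(I, ℂ)) + (c * l) • M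
  have hB_apply (g : C(I, ℂ)) (t : I) : B g t = (γ + c * l * (t : ℝ)) * g t := by
    simp only [B, add_apply, smul_apply, one_apply_eq_self, ContinuousMap.add_apply,
      ContinuousMap.coe_smul, Pi.smul_apply, smul_eq_mul, hM]
    ring
  have hB : ‖B‖ ≤ max γ ‖(γ : ℂ) + c * l‖ :=
    ContinuousMap.opNorm_le_of_apply_eq_mul hB_apply (hγ.trans (le_max_left _ _))
      fun t => Complex.norm_ofReal_add_mul_le_max hγ _ t.2
  have hγ_lt : γ < ‖(γ : ℂ) + c * (t₀ : ℝ)‖ := calc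
    γ < ((γ : ℂ) + c * (t₀ : ℝ)).re := by simpa using hct₀
    _ ≤ _ := Complex.re_le_norm _
  have hψ : (ContinuousMap.evalCLM ℂ t₀ ∘L X) ∘L B =
      ((γ : ℂ) + c * (t₀ : ℝ)) • (ContinuousMap.evalCLM ℂ t₀ ∘L X) := by
    ext g
    have hg : (t₀ : ℂ) * X g t₀ = l * X (M g) t₀ := by simpa [hM] using congr($hMX g t₀)
    simp only [B, ContinuousLinearMap.comp_add, ContinuousLinearMap.comp_smulₛₗ, RingHom.id_apply,
      add_apply, smul_apply, ContinuousLinearMap.comp_apply, one_apply_eq_self,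
      ContinuousMap.evalCLM_apply, smul_eq_mul]
    linear_combination -c * hg
  have hψ_zero := ContinuousLinearMap.eq_zero_of_comp_eq_smul_of_norm_lt hψ
    (hB.trans_lt (max_lt hγ_lt hlt))
  simpa using congr($hψ_zero f)

end unitInterval

/-- If `λ ∈ ℂ` is an extended eigenvalue of the position operator `(M f)(t) = t f(t)` on
`C[0,1]`, i.e. `M X = λ X M` for some nonzero bounded operator `X`, then `λ` is a positive
real number. -/
theorem extended_eigenvalue_of_position_operator_is_positive_real
    (M : C(Set.Icc (0:ℝ) 1, ℂ) →L[ℂ] C(Set.Icc (0:ℝ) 1, ℂ))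
    (hM : ∀ (f : C(Set.Icc (0:ℝ) 1, ℂ)) (t : Set.Icc (0:ℝ) 1),
      M f t = ((t : ℝ) : ℂ) * f t)
    (l : ℂ)
    (hev : ∃ X : C(Set.Icc (0:ℝ) 1, ℂ) →L[ℂ] C(Set.Icc (0:ℝ) 1, ℂ),
      X ≠ 0 ∧ M ∘L X = l • (X ∘L M)) :
    l.im = 0 ∧ 0 < l.re := by
  obtain ⟨X, hX, hMX⟩ := hev
  by_contra hl
  obtain ⟨c, hc, hcl⟩ := Complex.exists_re_pos_re_mul_nonpos hl
  refine hX (ContinuousLinearMap.ext fun f => ContinuousMap.ext fun t => congrFun ?_ t)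
  refine (X f).continuous.ext_on (dense_compl_singleton 0) continuous_const fun t ht => ?_
  exact apply_eq_zero_of_comp_eq_smul_comp_position hM hMX hc hcl
    (t.2.1.lt_of_ne fun h => ht (Subtype.ext h.symm)) f
end

section
/- Let M_t be the position operator on C[0,1] defined by (M_t f)(t) = t f(t), and let λ be a real number with λ > 0. Then λ is an extended eigenvalue of M_t, and a bounded operator X on C[0,1] satisfies M_t X = λ X M_t and X ≠ 0 if and only if there exists a nonzero function φ ∈ C[0,1] with φ(t) = 0 for all t ∈ [0,1] with t > λ, such that for every f ∈ C[0,1]: (X f)(t) = φ(t) f(t/λ) for t ∈ [0,1] with t ≤ λ, and (X f)(t) = 0 for t ∈ [0,1] with t > λ. -/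
/-!
If `M X = λ X M`, then for each `t` the functional `ψₜ = δₜ ∘ X` satisfies
`ψₜ (e f) = (t / λ) ψₜ f`, where `e s = s`. For `t > λ`, iterating gives
`(t / λ)ⁿ ‖ψₜ f‖ ≤ ‖X‖ ‖f‖` for all `n`, so `ψₜ = 0`. For `t ≤ λ`, the `g` with
`ψₜ (g f) = g (t / λ) ψₜ f` for all `f` form a closed subalgebra containing the self-adjoint,
point-separating `e`; by Stone–Weierstrass it is everything, so `(X f) t = (X 1) t f (t / λ)`.
Conversely every such weighted dilation satisfies `M X = λ X M`, and the weight
`φ t = (λ - t)⁺` gives a nonzero one.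
-/

namespace ContinuousLinearMap

variable {𝕜 A : Type*} [NontriviallyNormedField 𝕜] [SeminormedRing A] [NormedSpace 𝕜 A]

theorem norm_pow_mul_norm_apply_le (ψ : A →L[𝕜] 𝕜) {e : A} (he : ‖e‖ ≤ 1) {c : 𝕜}
    (h : ∀ f, ψ (e * f) = c * ψ f) (n : ℕ) (f : A) : ‖c‖ ^ n * ‖ψ f‖ ≤ ‖ψ‖ * ‖f‖ := by
  induction n generalizing f with
  | zero => simpa using ψ.le_opNorm f
  | succ n ih =>
    calc ‖c‖ ^ (n + 1) * ‖ψ f‖ = ‖c‖ ^ n * ‖ψ (e * f)‖ := by rw [h, norm_mul]; ring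
      _ ≤ ‖ψ‖ * ‖e * f‖ := ih _
      _ ≤ ‖ψ‖ * ‖f‖ := by
        gcongr
        exact (norm_mul_le e f).trans (mul_le_of_le_one_left (norm_nonneg f) he)

theorem eq_zero_of_map_mul_eq_mul (ψ : A →L[𝕜] 𝕜) {e : A} (he : ‖e‖ ≤ 1) {c : 𝕜}
    (hc : 1 < ‖c‖) (h : ∀ f, ψ (e * f) = c * ψ f) : ψ = 0 := by
  ext f
  by_contra hf
  obtain ⟨n, hn⟩ := pow_unbounded_of_one_lt (‖ψ‖ * ‖f‖ / ‖ψ f‖) hc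
  rw [div_lt_iff₀ (norm_pos_iff.2 hf)] at hn
  exact hn.not_ge (ψ.norm_pow_mul_norm_apply_le he h n f)

end ContinuousLinearMap

namespace ContinuousMap

variable {K 𝕜 : Type*} [TopologicalSpace K] [CompactSpace K] [RCLike 𝕜]

def multiplierSubalgebra (ψ : C(K, 𝕜) →L[𝕜] 𝕜) (s : K) : Subalgebra 𝕜 C(K, 𝕜) where
  carrier := {g | ∀ f, ψ (g * f) = g s * ψ f}
  mul_mem' {g h} hg hh f := by
    rw [mul_assoc, hg (h * f), hh f, mul_apply, mul_assoc]
  add_mem' {g h} hg hh f := by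
    rw [add_mul, map_add, hg f, hh f, add_apply, add_mul]
  algebraMap_mem' r f := by
    simp [Algebra.algebraMap_eq_smul_one]

theorem isClosed_multiplierSubalgebra (ψ : C(K, 𝕜) →L[𝕜] 𝕜) (s : K) :
    IsClosed (multiplierSubalgebra ψ s : Set C(K, 𝕜)) := by
  have : (multiplierSubalgebra ψ s : Set C(K, 𝕜)) =
      ⋂ f, {g | ψ (g * f) = g s * ψ f} := by
    ext; simp [multiplierSubalgebra]
  rw [this]
  exact isClosed_iInter fun f => isClosed_eq (by fun_prop) (by fun_prop)

theorem map_eq_apply_mul_map_one (ψ : C(K, 𝕜) →L[𝕜] 𝕜) {e : C(K, 𝕜)}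
    (he : IsSelfAdjoint e) (he_inj : Function.Injective e) (s : K)
    (h : ∀ f, ψ (e * f) = e s * ψ f) (g : C(K, 𝕜)) : ψ g = g s * ψ 1 := by
  have hle : (StarAlgebra.adjoin 𝕜 {e}).toSubalgebra ≤ multiplierSubalgebra ψ s := by
    rw [StarAlgebra.adjoin_toSubalgebra, Set.star_singleton, he.star_eq, Set.union_self,
      Algebra.adjoin_le_iff, Set.singleton_subset_iff]
    exact h
  have hsep : (StarAlgebra.adjoin 𝕜 {e}).SeparatesPoints := fun x y hxy =>
    ⟨e, ⟨e, StarAlgebra.subset_adjoin 𝕜 {e} rfl, rfl⟩, he_inj.ne hxy⟩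
  have hdense : g ∈ closure (StarAlgebra.adjoin 𝕜 {e} : Set C(K, 𝕜)) := by
    rw [← StarSubalgebra.topologicalClosure_coe,
      starSubalgebra_topologicalClosure_eq_top_of_separatesPoints _ hsep]
    trivial
  simpa using closure_minimal hle (isClosed_multiplierSubalgebra ψ s) hdense 1

end ContinuousMap

section PositionOperator

local notation "C₀₁" => C(Set.Icc (0:ℝ) 1, ℂ)

noncomputable def coordinate : C₀₁ := ⟨fun t => ((t : ℝ) : ℂ), by fun_prop⟩

@[simp]
theorem coordinate_apply (t : Set.Icc (0:ℝ) 1) : coordinate t = ((t : ℝ) : ℂ) := rfl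

theorem coordinate_injective : Function.Injective coordinate := fun _ _ h =>
  Subtype.ext (Complex.ofReal_injective h)

theorem isSelfAdjoint_coordinate : IsSelfAdjoint coordinate := by
  ext t
  simp [Complex.conj_ofReal]

theorem norm_coordinate_le_one : ‖coordinate‖ ≤ 1 :=
  (ContinuousMap.norm_le _ zero_le_one).2 fun t => by
    simpa [abs_of_nonneg t.2.1] using t.2.2

def IsWeightedDilation (l : ℝ) (hl : 0 < l) (φ : C₀₁) (X : C₀₁ →L[ℂ] C₀₁) : Prop :=
  ∀ (f : C₀₁) (t : Set.Icc (0:ℝ) 1),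
    (∀ h : (t : ℝ) ≤ l, X f t = φ t *
      f ⟨(t : ℝ) / l, ⟨div_nonneg t.2.1 hl.le, (div_le_one hl).mpr h⟩⟩) ∧
    (l < (t : ℝ) → X f t = 0)

noncomputable def ramp (l : ℝ) : C₀₁ := ⟨fun t => ((max (l - t) 0 : ℝ) : ℂ), by fun_prop⟩

theorem ramp_eq_zero_of_lt {l : ℝ} (t : Set.Icc (0:ℝ) 1) (h : l < t) : ramp l t = 0 := by
  simp [ramp, h.le]

theorem ramp_ne_zero {l : ℝ} (hl : 0 < l) : ramp l ≠ 0 := fun h => by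
  simpa [ramp, hl.ne', hl.le] using congr($h ⟨0, le_rfl, zero_le_one⟩)

variable (M : C₀₁ →L[ℂ] C₀₁)
  (hM : ∀ (f : C₀₁) (t : Set.Icc (0:ℝ) 1), M f t = ((t : ℝ) : ℂ) * f t)
  {l : ℝ} {hl : 0 < l} {φ : C₀₁} {X : C₀₁ →L[ℂ] C₀₁}

include hM in
theorem IsWeightedDilation.commute (hX : IsWeightedDilation l hl φ X) :
    M ∘L X = (l : ℂ) • (X ∘L M) := by
  have hl0 : (l : ℂ) ≠ 0 := Complex.ofReal_ne_zero.2 hl.ne'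
  ext f t
  simp only [ContinuousLinearMap.comp_apply, smul_apply,
    ContinuousMap.smul_apply, smul_eq_mul, hM]
  rcases le_or_gt (t : ℝ) l with h | h
  · rw [(hX f t).1 h, (hX (M f) t).1 h, hM]
    push_cast
    field_simp
  · rw [(hX f t).2 h, (hX (M f) t).2 h, mul_zero, mul_zero]

theorem IsWeightedDilation.apply_one (hX : IsWeightedDilation l hl φ X)
    (hφ : ∀ t : Set.Icc (0:ℝ) 1, l < (t : ℝ) → φ t = 0) : X 1 = φ := by
  ext t
  rcases le_or_gt (t : ℝ) l with h | h
  · simp [(hX 1 t).1 h]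
  · rw [(hX 1 t).2 h, hφ t h]

theorem IsWeightedDilation.ne_zero_iff (hX : IsWeightedDilation l hl φ X)
    (hφ : ∀ t : Set.Icc (0:ℝ) 1, l < (t : ℝ) → φ t = 0) : X ≠ 0 ↔ φ ≠ 0 := by
  refine ⟨fun hX0 hφ0 => hX0 ?_, fun hφ0 hX0 => hφ0 ?_⟩
  · ext f t
    rcases le_or_gt (t : ℝ) l with h | h
    · simp [(hX f t).1 h, hφ0]
    · exact (hX f t).2 h
  · rw [← hX.apply_one hφ, hX0, zero_apply]

include hM in
theorem apply_coordinate_mul_of_commute (hcomm : M ∘L X = (l : ℂ) • (X ∘L M)) (hl0 : l ≠ 0)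
    (f : C₀₁) (t : Set.Icc (0:ℝ) 1) :
    X (coordinate * f) t = ((t : ℝ) / l : ℂ) * X f t := by
  have hMf : M f = coordinate * f := by ext s; simp [hM]
  have h := congr($hcomm f t)
  simp only [ContinuousLinearMap.comp_apply, smul_apply,
    ContinuousMap.smul_apply, smul_eq_mul, hM, hMf] at h
  rw [div_mul_eq_mul_div, eq_div_iff (Complex.ofReal_ne_zero.2 hl0)]
  linear_combination -h

include hM in
theorem isWeightedDilation_of_commute (hcomm : M ∘L X = (l : ℂ) • (X ∘L M)) :
    IsWeightedDilation l hl (X 1) X := by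
  intro f t
  set ψ := (ContinuousMap.evalCLM ℂ t).comp X
  have hψ (g : C₀₁) : ψ (coordinate * g) = ((t : ℝ) / l : ℂ) * ψ g :=
    apply_coordinate_mul_of_commute M hM hcomm hl.ne' g t
  refine ⟨fun h => ?_, fun h => ?_⟩
  · have := ContinuousMap.map_eq_apply_mul_map_one ψ isSelfAdjoint_coordinate
      coordinate_injective ⟨(t : ℝ) / l, div_nonneg t.2.1 hl.le, (div_le_one hl).mpr h⟩
      (by simpa using hψ) f
    simpa [ψ, mul_comm] using this
  · have hc : 1 < ‖((t : ℝ) / l : ℂ)‖ := by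
      rw [← Complex.ofReal_div, Complex.norm_real, Real.norm_of_nonneg (div_nonneg t.2.1 hl.le)]
      exact (one_lt_div hl).2 h
    exact congr($(ψ.eq_zero_of_map_mul_eq_mul norm_coordinate_le_one hc hψ) f)

-- Clamping to `[0, 1]` only matters for `t > l`, where the weight vanishes.
noncomputable def dilation (l : ℝ) : C(Set.Icc (0:ℝ) 1, Set.Icc (0:ℝ) 1) :=
  ⟨fun t => Set.projIcc 0 1 zero_le_one ((t : ℝ) / l), by fun_prop⟩

noncomputable def weightedDilation (l : ℝ) (φ : C₀₁) : C₀₁ →L[ℂ] C₀₁ :=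
  ContinuousLinearMap.mul ℂ C₀₁ φ ∘L ContinuousMap.compCLM ℂ ℂ (dilation l)

theorem isWeightedDilation_weightedDilation
    (hφ : ∀ t : Set.Icc (0:ℝ) 1, l < (t : ℝ) → φ t = 0) :
    IsWeightedDilation l hl φ (weightedDilation l φ) := by
  refine fun f t => ⟨fun h => ?_, fun h => ?_⟩
  · have ht : (t : ℝ) / l ∈ Set.Icc (0:ℝ) 1 := ⟨div_nonneg t.2.1 hl.le, (div_le_one hl).mpr h⟩
    simp [weightedDilation, dilation, Set.projIcc_of_mem _ ht]
  · simp [weightedDilation, hφ t h]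

end PositionOperator

/-- For the position operator `(M f)(t) = t f(t)` on `C[0,1]` and a real `λ > 0`: `λ` is an
extended eigenvalue of `M`, and a bounded operator `X ≠ 0` satisfies `M X = λ X M` iff
there is a nonzero `φ ∈ C[0,1]` vanishing on `(λ, 1]` with `(X f)(t) = φ(t) f(t/λ)` for
`t ≤ λ` and `(X f)(t) = 0` for `t > λ`. -/
theorem position_operator_extended_eigenoperators
    (M : C(Set.Icc (0:ℝ) 1, ℂ) →L[ℂ] C(Set.Icc (0:ℝ) 1, ℂ))
    (hM : ∀ (f : C(Set.Icc (0:ℝ) 1, ℂ)) (t : Set.Icc (0:ℝ) 1),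
      M f t = ((t : ℝ) : ℂ) * f t)
    (l : ℝ) (hl : 0 < l) :
    (∃ X : C(Set.Icc (0:ℝ) 1, ℂ) →L[ℂ] C(Set.Icc (0:ℝ) 1, ℂ),
      X ≠ 0 ∧ M ∘L X = (l : ℂ) • (X ∘L M)) ∧
    ∀ X : C(Set.Icc (0:ℝ) 1, ℂ) →L[ℂ] C(Set.Icc (0:ℝ) 1, ℂ),
      (M ∘L X = (l : ℂ) • (X ∘L M) ∧ X ≠ 0) ↔
      ∃ φ : C(Set.Icc (0:ℝ) 1, ℂ), φ ≠ 0 ∧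
        (∀ t : Set.Icc (0:ℝ) 1, l < (t : ℝ) → φ t = 0) ∧
        ∀ (f : C(Set.Icc (0:ℝ) 1, ℂ)) (t : Set.Icc (0:ℝ) 1),
          (∀ h : (t : ℝ) ≤ l, X f t = φ t *
            f ⟨(t : ℝ) / l, ⟨div_nonneg t.2.1 hl.le, (div_le_one hl).mpr h⟩⟩) ∧
          (l < (t : ℝ) → X f t = 0) := by
  have characterization (X : C(Set.Icc (0:ℝ) 1, ℂ) →L[ℂ] C(Set.Icc (0:ℝ) 1, ℂ)) :
      (M ∘L X = (l : ℂ) • (X ∘L M) ∧ X ≠ 0) ↔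
        ∃ φ, φ ≠ 0 ∧ (∀ t : Set.Icc (0:ℝ) 1, l < (t : ℝ) → φ t = 0) ∧
          IsWeightedDilation l hl φ X := by
    constructor
    · rintro ⟨hcomm, hX0⟩
      have hX : IsWeightedDilation l hl (X 1) X := isWeightedDilation_of_commute M hM hcomm
      have hvanish (t : Set.Icc (0:ℝ) 1) (ht : l < (t : ℝ)) : X 1 t = 0 := (hX 1 t).2 ht
      exact ⟨X 1, (hX.ne_zero_iff hvanish).1 hX0, hvanish, hX⟩
    · rintro ⟨φ, hφ0, hφ, hX⟩
      exact ⟨hX.commute M hM, (hX.ne_zero_iff hφ).2 hφ0⟩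
  obtain ⟨hcomm, hX0⟩ := (characterization (weightedDilation l (ramp l))).2
    ⟨ramp l, ramp_ne_zero hl, ramp_eq_zero_of_lt,
      isWeightedDilation_weightedDilation ramp_eq_zero_of_lt⟩
  exact ⟨⟨_, hX0, hcomm⟩, characterization⟩
end

section
/- Let M_t be the position operator on C[0,1] defined by (M_t f)(t) = t f(t), let λ be a real number with λ > 0, and let 𝒳 = {X ∈ B(C[0,1]) : M_t X = λ X M_t} be the subspace of all extended eigenoperators of M_t associated with λ (together with 0). Then 𝒳 is a localizing subspace of B(C[0,1]) and 𝒳 contains no nonzero compact operator. -/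
open Filter Topology Polynomial

/-!
Localizing: on the ball `‖x - 1‖ ≤ 1/2` every `x` is bounded below by `1/2`, so for each `x`
the weighted composition `f ↦ (w / x ∘ τ) · f ∘ τ`, with `τ t = min (t/λ) 1` and `w` a bump
of height `1/2` supported in `[0, λ]`, has norm at most `1`, commutes with `M` up to `λ`,
and sends `x` to `w` itself.

No compact operator: from `M X = λ X M` one gets `X (p(λM) f) = p(M) (X f)` for every
polynomial `p`. Taking `p` with `p(t₀) = 1`, `|p| < 1` elsewhere on `[0,1]` and `|p(λt)| ≤ 1`,
the bounded sequence `p(λM)ⁿ f` is sent to `p(t)ⁿ (X f)(t)`, which converges pointwise to a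
function vanishing off `t₀`. Compactness makes that limit continuous, forcing `(X f)(t₀) = 0`.
-/

namespace ContinuousMap

variable {K L 𝕜 : Type*} [TopologicalSpace K] [CompactSpace K] [TopologicalSpace L]
  [CompactSpace L] [NontriviallyNormedField 𝕜]

noncomputable def weightedComp (u : C(K, 𝕜)) (τ : C(K, L)) : C(L, 𝕜) →L[𝕜] C(K, 𝕜) :=
  LinearMap.mkContinuous
    { toFun := fun f => u * f.comp τ
      map_add' := fun f g => by ext; simp [mul_add]
      map_smul' := fun c f => by ext; simp }
    ‖u‖ fun f => (norm_mul_le _ _).trans <| by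
      gcongr
      exact (norm_le _ (norm_nonneg f)).2 fun t => f.norm_coe_le_norm (τ t)

@[simp]
lemma weightedComp_apply (u : C(K, 𝕜)) (τ : C(K, L)) (f : C(L, 𝕜)) (t : K) :
    weightedComp u τ f t = u t * f (τ t) :=
  rfl

lemma norm_weightedComp_le (u : C(K, 𝕜)) (τ : C(K, L)) : ‖weightedComp u τ‖ ≤ ‖u‖ :=
  LinearMap.mkContinuous_norm_le _ (norm_nonneg u) _

end ContinuousMap

theorem SemiconjBy.aeval {R A : Type*} [CommSemiring R] [Semiring A] [Algebra R A]
    {x a b : A} (h : SemiconjBy x a b) (p : R[X]) :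
    SemiconjBy x (Polynomial.aeval a p) (Polynomial.aeval b p) := by
  induction p using Polynomial.induction_on with
  | C c => simpa only [aeval_C, SemiconjBy] using (Algebra.commutes c x).symm
  | add p q hp hq => simpa using hp.add_right hq
  | monomial n c hn => simpa [pow_succ, ← mul_assoc] using hn.mul_right h

section MultiplicationOperator

variable {K 𝕜 : Type*} [TopologicalSpace K] [CompactSpace K] [NontriviallyNormedField 𝕜]
  {M : C(K, 𝕜) →L[𝕜] C(K, 𝕜)} {m : K → 𝕜}

open ContinuousMap

theorem comp_weightedComp_eq_smul_weightedComp_comp (hM : ∀ f t, M f t = m t * f t)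
    {l : 𝕜} {u : C(K, 𝕜)} {τ : C(K, K)} (h : ∀ t, m t * u t = l * m (τ t) * u t) :
    M ∘L weightedComp u τ = l • (weightedComp u τ ∘L M) := by
  ext f t
  simp only [ContinuousLinearMap.comp_apply, FunLike.coe_smul, Pi.smul_apply,
    ContinuousMap.smul_apply, weightedComp_apply, hM, smul_eq_mul]
  linear_combination f (τ t) * h t

theorem aeval_apply_of_forall_apply_eq_mul (hM : ∀ f t, M f t = m t * f t) (p : 𝕜[X])
    (f : C(K, 𝕜)) (t : K) : Polynomial.aeval M p f t = p.eval (m t) * f t := by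
  induction p using Polynomial.induction_on generalizing f with
  | C c => simp
  | add p q hp hq => simp [hp, hq, add_mul]
  | monomial n c hn =>
    rw [pow_succ, ← mul_assoc, map_mul, aeval_X, mul_apply_eq_comp, hn, hM]
    simp only [eval_mul, eval_C, eval_pow, eval_X]
    ring

end MultiplicationOperator

theorem IsCompactOperator.continuous_of_tendsto_apply {K 𝕜 E : Type*} [TopologicalSpace K]
    [CompactSpace K] [NontriviallyNormedField 𝕜] [NormedAddCommGroup E] [NormedSpace 𝕜 E]
    {X : E →L[𝕜] C(K, 𝕜)} (hX : IsCompactOperator X) {f : ℕ → E} {C : ℝ}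
    (hf : ∀ n, ‖f n‖ ≤ C) {φ : K → 𝕜} (hφ : ∀ t, Tendsto (fun n => X (f n) t) atTop (𝓝 (φ t))) :
    Continuous φ := by
  obtain ⟨S, hS, hXS⟩ := hX.image_closedBall_subset_compact C
  obtain ⟨y, -, ψ, hψ, hy⟩ := hS.tendsto_subseq fun n =>
    hXS ⟨f n, mem_closedBall_zero_iff.2 (hf n), rfl⟩
  have : φ = y := funext fun t =>
    tendsto_nhds_unique ((hφ t).comp hψ.tendsto_atTop)
      (((continuous_eval_const t).tendsto y).comp hy)
  exact this ▸ y.continuous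

noncomputable def peakPoly (s R : ℝ) : ℂ[X] :=
  1 - (C (R : ℂ)⁻¹ * (X - C (s : ℂ))) ^ 2

theorem eval_ofReal_peakPoly (s R x : ℝ) :
    (peakPoly s R).eval (x : ℂ) = ((1 - ((x - s) / R) ^ 2 : ℝ) : ℂ) := by
  simp only [peakPoly, eval_sub, eval_one, eval_pow, eval_mul, eval_C, eval_X]
  push_cast
  ring

theorem eval_peakPoly_self (s R : ℝ) : (peakPoly s R).eval (s : ℂ) = 1 := by
  simp [eval_ofReal_peakPoly]

theorem norm_eval_peakPoly_le {s R x : ℝ} (hR : 0 < R) (hx : |x - s| ≤ R) :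
    ‖(peakPoly s R).eval (x : ℂ)‖ ≤ 1 := by
  have : ((x - s) / R) ^ 2 ≤ 1 :=
    (sq_le_one_iff_abs_le_one _).2 (by rwa [abs_div, abs_of_pos hR, div_le_one hR])
  rw [eval_ofReal_peakPoly, Complex.norm_real, Real.norm_eq_abs, abs_le]
  constructor <;> nlinarith [sq_nonneg ((x - s) / R)]

theorem norm_eval_peakPoly_lt_one {s R x : ℝ} (hR : 0 < R) (hx : |x - s| ≤ R) (hxs : x ≠ s) :
    ‖(peakPoly s R).eval (x : ℂ)‖ < 1 := by
  have h₁ : ((x - s) / R) ^ 2 ≤ 1 :=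
    (sq_le_one_iff_abs_le_one _).2 (by rwa [abs_div, abs_of_pos hR, div_le_one hR])
  have h₂ : 0 < ((x - s) / R) ^ 2 := by
    have := sub_ne_zero.2 hxs
    positivity
  rw [eval_ofReal_peakPoly, Complex.norm_real, Real.norm_eq_abs, abs_lt]
  constructor <;> linarith

theorem eq_zero_of_continuous_piSingle {K E : Type*} [TopologicalSpace K] [DecidableEq K]
    [TopologicalSpace E] [T2Space E] [Zero E] {t₀ : K} [(𝓝[≠] t₀).NeBot] {c : E}
    (h : Continuous (Pi.single t₀ c : K → E)) : c = 0 := by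
  have h₀ := h.continuousAt (x := t₀)
  rw [ContinuousAt, Pi.single_eq_same] at h₀
  refine tendsto_nhds_unique (h₀.mono_left (nhdsWithin_le_nhds (s := {t₀}ᶜ))) ?_
  exact tendsto_const_nhds.congr' <|
    eventually_nhdsWithin_of_forall fun t ht => (Pi.single_eq_of_ne (M := fun _ => E) ht c).symm

open ContinuousMap in
theorem isLocalizing_setOf_comp_eq_smul_comp_of_weight {K : Type*} [TopologicalSpace K]
    [CompactSpace K] [Nonempty K]
    {M : C(K, ℂ) →L[ℂ] C(K, ℂ)} {m : K → ℂ} (hM : ∀ f t, M f t = m t * f t) {l : ℂ}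
    (τ : C(K, K)) (w : C(K, ℂ)) (hw₀ : w ≠ 0) (hw : ‖w‖ ≤ 1 / 2)
    (hτ : ∀ t, m t * w t = l * m (τ t) * w t) :
    IsLocalizing {X : C(K, ℂ) →L[ℂ] C(K, ℂ) | M ∘L X = l • (X ∘L M)} := by
  refine ⟨1, 1 / 2, by norm_num, by norm_num, fun x hx => ?_⟩
  have hx_ge (n : ℕ) (t : K) : 1 / 2 ≤ ‖x n t‖ := by
    have h₁ : ‖x n t - 1‖ ≤ 1 / 2 :=
      (norm_coe_le_norm (x n - 1) t).trans (mem_closedBall_iff_norm.1 (hx n))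
    have h₂ := norm_sub_norm_le (1 : ℂ) (x n t)
    rw [norm_one, norm_sub_rev] at h₂
    linarith
  have hx_ne (n : ℕ) (t : K) : x n t ≠ 0 := fun h => by
    have := hx_ge n t
    rw [h, norm_zero] at this
    linarith
  let u : ℕ → C(K, ℂ) := fun n =>
    ⟨fun t => w t / x n (τ t), w.continuous.div ((x n).comp τ).continuous fun t => hx_ne n _⟩
  refine ⟨id, fun n => weightedComp (u n) τ, w, strictMono_id, fun n => ?_, fun n => ?_, hw₀, ?_⟩
  · refine comp_weightedComp_eq_smul_weightedComp_comp hM fun t => ?_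
    simp only [u, coe_mk, div_eq_mul_inv]
    linear_combination (x n (τ t))⁻¹ * hτ t
  · refine (norm_weightedComp_le _ _).trans ((norm_le _ zero_le_one).2 fun t => ?_)
    rw [coe_mk, norm_div, div_le_one ((by norm_num : (0 : ℝ) < 1 / 2).trans_le (hx_ge n _))]
    exact (w.norm_coe_le_norm t).trans (hw.trans (hx_ge n _))
  · convert tendsto_const_nhds with n
    ext t
    exact div_mul_cancel₀ _ (hx_ne n _)

section PositionOperator

open unitInterval

theorem isLocalizing_setOf_comp_eq_smul_comp {M : C(I, ℂ) →L[ℂ] C(I, ℂ)}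
    (hM : ∀ f (t : I), M f t = ((t : ℝ) : ℂ) * f t) {l : ℝ} (hl : 0 < l) :
    IsLocalizing {X : C(I, ℂ) →L[ℂ] C(I, ℂ) | M ∘L X = (l : ℂ) • (X ∘L M)} := by
  let τ : C(I, I) := ⟨fun t => Set.projIcc 0 1 zero_le_one (t / l), by fun_prop⟩
  let w : C(I, ℂ) := ⟨fun t => ((max 0 (1 - t / l) / 2 : ℝ) : ℂ), by fun_prop⟩
  refine isLocalizing_setOf_comp_eq_smul_comp_of_weight hM τ w (fun h => ?_) ?_ fun t => ?_
  · have := congr($h 0)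
    norm_num [w] at this
  · refine (ContinuousMap.norm_le _ (by norm_num)).2 fun t => ?_
    have : 0 ≤ (t : ℝ) / l := div_nonneg t.2.1 hl.le
    simp only [w, ContinuousMap.coe_mk, Complex.norm_real, Real.norm_eq_abs]
    rw [abs_of_nonneg (by positivity)]
    linarith [max_le (zero_le_one' ℝ) (by linarith : 1 - (t : ℝ) / l ≤ 1)]
  · rcases lt_or_ge (t : ℝ) l with ht | ht
    · have : (τ t : ℝ) = t / l := by
        simp only [τ, ContinuousMap.coe_mk]
        rw [Set.projIcc_of_mem _ ⟨div_nonneg t.2.1 hl.le, (div_le_one hl).2 ht.le⟩]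
      rw [this, Complex.ofReal_div]
      field_simp [Complex.ofReal_ne_zero.2 hl.ne']
    · have : max 0 (1 - (t : ℝ) / l) = 0 :=
        max_eq_left (by rw [sub_nonpos, le_div_iff₀ hl]; linarith)
      simp [w, this]

theorem eq_zero_of_isCompactOperator_of_comp_eq_smul_comp {M : C(I, ℂ) →L[ℂ] C(I, ℂ)}
    (hM : ∀ f (t : I), M f t = ((t : ℝ) : ℂ) * f t) {l : ℝ} (hl : 0 < l)
    {T : C(I, ℂ) →L[ℂ] C(I, ℂ)} (hT : M ∘L T = (l : ℂ) • (T ∘L M)) (hTc : IsCompactOperator T) :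
    T = 0 := by
  by_contra hT₀
  obtain ⟨f, t₀, hf⟩ : ∃ f t, T f t ≠ 0 := by
    contrapose! hT₀
    ext f t
    exact hT₀ f t
  let p := peakPoly t₀ (l + 1)
  have hR : 0 < l + 1 := by linarith
  have hlM (g : C(I, ℂ)) (t : I) : ((l : ℂ) • M) g t = ((l * t : ℝ) : ℂ) * g t := by
    simp [hM, mul_assoc]
  have hsemi : SemiconjBy T ((l : ℂ) • M) M := by
    change T ∘L ((l : ℂ) • M) = M ∘L T
    rw [ContinuousLinearMap.comp_smul, hT]
  let g : ℕ → C(I, ℂ) := fun n => aeval ((l : ℂ) • M) (p ^ n) f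
  have hTg (n : ℕ) (t : I) : T (g n) t = p.eval ((t : ℝ) : ℂ) ^ n * T f t := by
    rw [← mul_apply_eq_comp, (hsemi.aeval (p ^ n)).eq, mul_apply_eq_comp,
      aeval_apply_of_forall_apply_eq_mul hM, eval_pow]
  have hg (n : ℕ) : ‖g n‖ ≤ ‖f‖ := by
    refine (ContinuousMap.norm_le _ (norm_nonneg f)).2 fun t => ?_
    rw [aeval_apply_of_forall_apply_eq_mul hlM, eval_pow, norm_mul, norm_pow]
    refine (mul_le_of_le_one_left (norm_nonneg _) (pow_le_one₀ (norm_nonneg _) ?_)).trans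
      (f.norm_coe_le_norm t)
    refine norm_eval_peakPoly_le hR (abs_le.2 ⟨?_, ?_⟩) <;>
      nlinarith [t.2.1, t.2.2, t₀.2.1, t₀.2.2]
  have hlim (t : I) :
      Tendsto (fun n => T (g n) t) atTop (𝓝 ((Pi.single t₀ (T f t₀) : I → ℂ) t)) := by
    simp_rw [hTg]
    rcases eq_or_ne t t₀ with rfl | ht
    · simp [p, eval_peakPoly_self]
    · rw [Pi.single_eq_of_ne ht, ← zero_mul (T f t)]
      refine (tendsto_pow_atTop_nhds_zero_of_norm_lt_one ?_).mul_const _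
      refine norm_eval_peakPoly_lt_one hR (abs_le.2 ⟨?_, ?_⟩) fun h => ht (Subtype.ext h) <;>
        linarith [t.2.1, t.2.2, t₀.2.1, t₀.2.2]
  exact hf (eq_zero_of_continuous_piSingle (hTc.continuous_of_tendsto_apply hg hlim))

end PositionOperator

/-- For the position operator `(M f)(t) = t f(t)` on `C[0,1]` and a real `λ > 0`, the
subspace `𝒳 = {X : M X = λ X M}` of extended eigenoperators of `M` associated with `λ`
is localizing and contains no nonzero compact operator. -/
theorem position_operator_eigenoperators_localizing_no_compact
    (M : C(Set.Icc (0:ℝ) 1, ℂ) →L[ℂ] C(Set.Icc (0:ℝ) 1, ℂ))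
    (hM : ∀ (f : C(Set.Icc (0:ℝ) 1, ℂ)) (t : Set.Icc (0:ℝ) 1),
      M f t = ((t : ℝ) : ℂ) * f t)
    (l : ℝ) (hl : 0 < l) :
    IsLocalizing {X : C(Set.Icc (0:ℝ) 1, ℂ) →L[ℂ] C(Set.Icc (0:ℝ) 1, ℂ) |
        M ∘L X = (l : ℂ) • (X ∘L M)} ∧
    ∀ X : C(Set.Icc (0:ℝ) 1, ℂ) →L[ℂ] C(Set.Icc (0:ℝ) 1, ℂ),
      M ∘L X = (l : ℂ) • (X ∘L M) → IsCompactOperator X → X = 0 :=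
  ⟨isLocalizing_setOf_comp_eq_smul_comp hM hl,
    fun _ hX hXc => eq_zero_of_isCompactOperator_of_comp_eq_smul_comp hM hl hX hXc⟩
end
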